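/- arXiv:1301.1113 — 8 statements merged into one kernel-verified Lean document; each statement's English description precedes it below -/
import Mathlib

section
/- Let K be a field of characteristic 2 and consider the power series ring K[[a_1,a_2,b_1,b_2]]. The element r = b_2·((1+a_1) − (1+a_1)^{-1}) − b_1·((1+a_2) − (1+a_2)^{-1}) is irreducible in K[[a_1,a_2,b_1,b_2]]. -/
/-!
Multiplying `r` by the unit `(1 + a₁)(1 + a₂)` gives, in characteristic 2, the polynomial
`a₁²b₂ + a₂²b₁ + (a₁²a₂b₂ + a₁a₂²b₁)`, because `(1 + a)² - 1 = a²`. Taking the lowest-degree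
homogeneous part (the initial form) of a power series is multiplicative and detects units, so a
power series with irreducible initial form is irreducible. The initial form here is
`a₁²b₂ + a₂²b₁`, a sum of two monomials in disjoint variables, one of them linear in `b₂`,
hence irreducible.
-/

namespace MvPowerSeries

variable {σ R : Type*} [Finite σ] [CommRing R]

noncomputable def initialForm (f : MvPowerSeries σ R) : MvPolynomial σ R :=
  truncTotal (f.order.toNat + 1) (homogeneousComponent f.order.toNat f)

theorem coeff_initialForm (f : MvPowerSeries σ R) (d : σ →₀ ℕ) :
    (initialForm f).coeff d = if d.degree = f.order.toNat then coeff d f else 0 := by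
  rw [initialForm, coeff_truncTotal_eq_ite, coeff_homogeneousComponent]
  split_ifs <;> first | rfl | omega

theorem coe_initialForm (f : MvPowerSeries σ R) :
    (initialForm f : MvPowerSeries σ R) = homogeneousComponent f.order.toNat f := by
  ext d
  rw [MvPolynomial.coeff_coe, coeff_initialForm, coeff_homogeneousComponent]

theorem initialForm_mul [IsDomain R] (f g : MvPowerSeries σ R) :
    initialForm (f * g) = initialForm f * initialForm g := by
  rcases eq_or_ne f 0 with rfl | hf
  · simp [initialForm]
  rcases eq_or_ne g 0 with rfl | hg
  · simp [initialForm]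
  apply MvPolynomial.coe_injective
  rw [MvPolynomial.coe_mul, coe_initialForm, coe_initialForm, coe_initialForm, order_mul,
    ENat.toNat_add (order_eq_top_iff.not.mpr hf) (order_eq_top_iff.not.mpr hg)]
  exact homogeneousComponent_mul_of_le_order (ENat.natCast_toNat_le_self _)
    (ENat.natCast_toNat_le_self _)

theorem isUnit_initialForm_iff [Nontrivial R] {f : MvPowerSeries σ R} :
    IsUnit (initialForm f) ↔ IsUnit f := by
  constructor
  · intro h
    have h0 := h.map MvPolynomial.constantCoeff
    rw [MvPolynomial.constantCoeff_eq, coeff_initialForm] at h0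
    split_ifs at h0
    · rwa [isUnit_iff_constantCoeff, ← coeff_zero_eq_constantCoeff_apply]
    · exact absurd h0 not_isUnit_zero
  · intro h
    have hc := isUnit_iff_constantCoeff.mp h
    have hord : f.order = 0 :=
      nonpos_iff_eq_zero.mp (by simpa using order_le (d := 0) (by simpa using hc.ne_zero))
    have hC : initialForm f = MvPolynomial.C (constantCoeff f) := by
      classical
      ext d
      rw [coeff_initialForm, hord, MvPolynomial.coeff_C, ENat.toNat_zero]
      simp only [Finsupp.degree_eq_zero_iff, eq_comm (a := (0 : σ →₀ ℕ))]
      split_ifs with hd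
      · rw [hd, coeff_zero_eq_constantCoeff_apply]
      · rfl
    rw [hC]
    exact hc.map _

theorem irreducible_of_irreducible_initialForm [IsDomain R] {f : MvPowerSeries σ R}
    (hf : Irreducible (initialForm f)) : Irreducible f := by
  refine ⟨fun h => hf.not_isUnit (isUnit_initialForm_iff.mpr h), fun g h hgh => ?_⟩
  rw [hgh, initialForm_mul] at hf
  simpa only [isUnit_initialForm_iff] using hf.isUnit_or_isUnit rfl

theorem initialForm_coe_add {P Q : MvPolynomial σ R} {m n : ℕ} (hP : P.IsHomogeneous m)
    (hP0 : P ≠ 0) (hQ : Q.IsHomogeneous n) (hmn : m < n) :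
    initialForm ((P + Q : MvPolynomial σ R) : MvPowerSeries σ R) = P := by
  have hQ_coeff {d : σ →₀ ℕ} (hd : d.degree ≤ m) : Q.coeff d = 0 := hQ.coeff_eq_zero (by omega)
  have hord : ((P + Q : MvPolynomial σ R) : MvPowerSeries σ R).order = m := by
    obtain ⟨d, hd⟩ := MvPolynomial.exists_coeff_ne_zero hP0
    have hdm : d.degree = m := by rw [Finsupp.degree_eq_weight_one]; exact hP hd
    refine order_eq_nat.mpr ⟨⟨d, ?_, hdm⟩, fun e he => ?_⟩
    · simpa [MvPolynomial.coeff_coe, hQ_coeff hdm.le] using hd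
    · simp [MvPolynomial.coeff_coe, hQ_coeff he.le, hP.coeff_eq_zero he.ne]
  ext d
  rw [coeff_initialForm, hord, ENat.toNat_natCast, MvPolynomial.coeff_coe,
    MvPolynomial.coeff_add]
  split_ifs with hd
  · rw [hQ_coeff hd.le, add_zero]
  · rw [hP.coeff_eq_zero hd]

end MvPowerSeries

namespace MvPolynomial

variable {σ R : Type*} [CommRing R] [IsDomain R]

theorem irreducible_monomial_add_monomial {d d' : σ →₀ ℕ}
    (hdd' : Disjoint d.support d'.support) {i : σ} (hi : d i = 1) :
    Irreducible (monomial d (1 : R) + monomial d' 1) := by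
  classical
  have hne : d ≠ d' := by
    rintro rfl
    simp [Finsupp.support_eq_empty.mp (Finset.disjoint_self_iff_empty _ |>.mp hdd')] at hi
  have hsupp : (monomial d (1 : R) + monomial d' 1).support = {d, d'} := by
    ext e
    rcases eq_or_ne d e with rfl | hde
    · simp [coeff_monomial, hne.symm]
    · simp [coeff_monomial, hde, hde.symm, eq_comm]
  refine irreducible_of_disjoint_support (d := d) (i := i) ?_ (by simp [hsupp]) hi ?_ ?_
  · rw [hsupp, Finset.Nontrivial, Finset.coe_pair]
    exact Set.nontrivial_pair hne
  · rw [hsupp, Finset.coe_pair]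
    exact Set.pairwise_pair.mpr fun _ => ⟨hdd', hdd'.symm⟩
  · intro r hr
    exact isUnit_of_dvd_one (by simpa [coeff_monomial, hne.symm] using hr d)

end MvPolynomial

section

open MvPolynomial

variable {R : Type*} [CommRing R]

noncomputable def cubicPart : MvPolynomial (Fin 4) R :=
  X 0 ^ 2 * X 3 + X 1 ^ 2 * X 2

noncomputable def quarticPart : MvPolynomial (Fin 4) R :=
  X 0 ^ 2 * X 1 * X 3 + X 0 * X 1 ^ 2 * X 2

theorem isHomogeneous_cubicPart : (cubicPart : MvPolynomial (Fin 4) R).IsHomogeneous 3 :=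
  ((isHomogeneous_X_pow _ 2).mul (isHomogeneous_X _ _)).add
    ((isHomogeneous_X_pow _ 2).mul (isHomogeneous_X _ _))

theorem isHomogeneous_quarticPart : (quarticPart : MvPolynomial (Fin 4) R).IsHomogeneous 4 :=
  (((isHomogeneous_X_pow _ 2).mul (isHomogeneous_X _ _)).mul (isHomogeneous_X _ _)).add
    (((isHomogeneous_X _ _).mul (isHomogeneous_X_pow _ 2)).mul (isHomogeneous_X _ _))

theorem cubicPart_eq_monomial_add_monomial :
    (cubicPart : MvPolynomial (Fin 4) R) =
      monomial (Finsupp.single 0 2 + Finsupp.single 3 1) 1 +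
        monomial (Finsupp.single 1 2 + Finsupp.single 2 1) 1 := by
  simp only [cubicPart, X, monomial_pow, monomial_mul, one_pow, Finsupp.smul_single,
    smul_eq_mul, mul_one]

theorem irreducible_cubicPart [IsDomain R] :
    Irreducible (cubicPart : MvPolynomial (Fin 4) R) := by
  rw [cubicPart_eq_monomial_add_monomial]
  refine irreducible_monomial_add_monomial ?_ (i := 3) (by simp)
  rw [Finset.disjoint_left]
  intro i
  fin_cases i <;> simp

end

open MvPowerSeries in
theorem mul_one_add_X_mul_one_add_X_eq_coe {K : Type*} [Field K] [CharP K 2] :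
    (X 3 * ((1 + X 0) - (1 + X 0)⁻¹) - X 2 * ((1 + X 1) - (1 + X 1)⁻¹)
        : MvPowerSeries (Fin 4) K) * ((1 + X 0) * (1 + X 1)) =
      ((cubicPart + quarticPart : MvPolynomial (Fin 4) K) : MvPowerSeries (Fin 4) K) := by
  have h2 : (2 : MvPowerSeries (Fin 4) K) = 0 := by
    rw [← map_ofNat (C (σ := Fin 4)) 2, CharTwo.two_eq_zero, map_zero]
  have hsq (i : Fin 4) :
      (1 + X i) * ((1 + X i) - (1 + X i)⁻¹) = (X i ^ 2 : MvPowerSeries (Fin 4) K) := by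
    have hinv : (1 + X i) * (1 + X i)⁻¹ = (1 : MvPowerSeries (Fin 4) K) :=
      MvPowerSeries.mul_inv_cancel _ (by simp)
    linear_combination -hinv + X i * h2
  simp only [cubicPart, quarticPart, MvPolynomial.coe_add, MvPolynomial.coe_mul,
    MvPolynomial.coe_pow, MvPolynomial.coe_X]
  linear_combination
    X 3 * (1 + X 1) * hsq 0 - X 2 * (1 + X 0) * hsq 1 - X 2 * X 1 ^ 2 * (1 + X 0) * h2

/-- Let `K` be a field of characteristic 2. In the power series ring `K[[a₁, a₂, b₁, b₂]]`
(here `a₁ = X 0`, `a₂ = X 1`, `b₁ = X 2`, `b₂ = X 3`), the element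
`r = b₂·((1+a₁) − (1+a₁)⁻¹) − b₁·((1+a₂) − (1+a₂)⁻¹)` is irreducible. -/
theorem statement2 {K : Type*} [Field K] [CharP K 2] :
    Irreducible
      ((MvPowerSeries.X 3) *
          ((1 + MvPowerSeries.X 0) - (1 + MvPowerSeries.X 0)⁻¹)
        - (MvPowerSeries.X 2) *
          ((1 + MvPowerSeries.X 1) - (1 + MvPowerSeries.X 1)⁻¹)
        : MvPowerSeries (Fin 4) K) := by
  have hu : IsUnit
      ((1 + MvPowerSeries.X 0) * (1 + MvPowerSeries.X 1) : MvPowerSeries (Fin 4) K) := by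
    simp [MvPowerSeries.isUnit_iff_constantCoeff]
  rw [← irreducible_mul_isUnit hu, mul_one_add_X_mul_one_add_X_eq_coe]
  apply MvPowerSeries.irreducible_of_irreducible_initialForm
  rw [MvPowerSeries.initialForm_coe_add isHomogeneous_cubicPart irreducible_cubicPart.ne_zero
    isHomogeneous_quarticPart (by norm_num)]
  exact irreducible_cubicPart
end

section
/- Let A be a domain of characteristic p > 0 that is an algebra over a finite field 𝔽 contained in A, with fraction field K and algebraic closure K̄ of K. An element g ∈ GL_n(A) has all eigenvalues (in K̄) of finite multiplicative order if and only if its characteristic polynomial has coefficients in 𝔽. -/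
open Polynomial IntermediateField

/-!
A nonzero element of a field extension of the finite field `𝔽` is a root of unity exactly when
it is integral over `𝔽`, since it then lies in the finite field `𝔽⟮x⟯`. If all eigenvalues of
`g` are integral over `𝔽`, so are the coefficients of its characteristic polynomial (symmetric
functions of the eigenvalues); they lie in `A` and are algebraic over `𝔽`, hence in `𝔽`.
Conversely, if the characteristic polynomial is defined over `𝔽`, every eigenvalue is algebraic
over `𝔽`, and it is nonzero because `g` is invertible.
-/

theorem IsIntegral.isOfFinOrder {𝔽 L : Type*} [Field 𝔽] [Finite 𝔽] [Field L] [Algebra 𝔽 L]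
    {x : L} (hx : IsIntegral 𝔽 x) (hx0 : x ≠ 0) : IsOfFinOrder x := by
  have : FiniteDimensional 𝔽 𝔽⟮x⟯ := adjoin.finiteDimensional hx
  have : Finite 𝔽⟮x⟯ := Module.finite_of_finite 𝔽
  have hgen : AdjoinSimple.gen 𝔽 x ≠ 0 := by
    simpa [← Subtype.coe_ne_coe] using hx0
  simpa using MonoidHom.isOfFinOrder
    ((val _).toMonoidHom.comp (Units.coeHom _)) (isOfFinOrder_of_finite (Units.mk0 _ hgen))

theorem IsOfFinOrder.isIntegral {R B : Type*} [CommRing R] [Ring B] [Algebra R B] {x : B}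
    (hx : IsOfFinOrder x) : IsIntegral R x := by
  obtain ⟨k, hk, hxk⟩ := isOfFinOrder_iff_pow_eq_one.mp hx
  exact IsIntegral.of_pow hk (hxk ▸ isIntegral_one)

theorem Multiset.coeff_prod_X_sub_C_mem {R S : Type*} [CommRing R] [SetLike S R]
    [SubringClass S R] (T : S) {s : Multiset R} (hs : ∀ a ∈ s, a ∈ T) (i : ℕ) :
    ((s.map fun a => X - C a).prod).coeff i ∈ T := by
  induction s using Multiset.induction generalizing i with
  | empty =>
    rw [Multiset.map_zero, Multiset.prod_zero, coeff_one]
    split_ifs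
    exacts [one_mem T, zero_mem T]
  | cons a s ih =>
    have ih := ih fun b hb => hs b (Multiset.mem_cons_of_mem hb)
    rw [Multiset.map_cons, Multiset.prod_cons, sub_mul, coeff_sub, coeff_C_mul]
    refine sub_mem ?_ (mul_mem (hs a (Multiset.mem_cons_self a s)) (ih i))
    cases i with
    | zero => simp
    | succ i => simpa only [coeff_X_mul] using ih i

theorem Polynomial.Splits.isIntegral_coeff_of_forall_isRoot {R L : Type*} [CommRing R] [Field L]
    [Algebra R L] {Q : L[X]} (hsplit : Q.Splits) (hQ : Q.Monic)
    (hroots : ∀ x, Q.IsRoot x → IsIntegral R x) (i : ℕ) : IsIntegral R (Q.coeff i) := by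
  rw [hsplit.eq_prod_roots_of_monic hQ]
  exact Multiset.coeff_prod_X_sub_C_mem (integralClosure R L)
    (fun x hx => hroots x (isRoot_of_mem_roots hx)) i

theorem Polynomial.Monic.isIntegral_coeff_of_forall_aeval_eq_zero {R A L : Type*} [CommRing R]
    [CommRing A] [Field L] [IsAlgClosed L] [Algebra R A] [Algebra A L] [Algebra R L]
    [IsScalarTower R A L] (hinj : Function.Injective (algebraMap A L)) {P : A[X]}
    (hP : P.Monic) (hroots : ∀ x : L, aeval x P = 0 → IsIntegral R x) (i : ℕ) :
    IsIntegral R (P.coeff i) := by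
  rw [← isIntegral_algHom_iff (IsScalarTower.toAlgHom R A L) hinj]
  simpa only [IsScalarTower.coe_toAlgHom', coeff_map] using
    (IsAlgClosed.splits (P.map (algebraMap A L))).isIntegral_coeff_of_forall_isRoot
      (hP.map _) (fun x hx => hroots x (by rwa [aeval_def, ← eval_map])) i

theorem IsAlgebraic.of_aeval_eq_zero_of_coeff_mem_range {R A L : Type*} [CommRing R]
    [CommRing A] [CommRing L] [Algebra R A] [Algebra A L] [Algebra R L] [IsScalarTower R A L]
    {P : A[X]} (hP : P ≠ 0) (hcoeff : ∀ i, P.coeff i ∈ (algebraMap R A).range) {x : L}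
    (hx : aeval x P = 0) : IsAlgebraic R x := by
  obtain ⟨Q, rfl⟩ := (mem_lifts P).mp ((lifts_iff_coeff_lifts P).mpr hcoeff)
  exact ⟨Q, fun h => hP (by rw [h, Polynomial.map_zero]), by rwa [← aeval_map_algebraMap A]⟩

theorem Matrix.isUnit_charpoly_coeff_zero {n A : Type*} [Fintype n] [DecidableEq n] [CommRing A]
    {M : Matrix n n A} (hM : IsUnit M) : IsUnit (M.charpoly.coeff 0) := by
  have hdet : IsUnit ((-1) ^ Fintype.card n * M.det) :=
    ((isUnit_neg_one.pow _).mul ((isUnit_iff_isUnit_det M).mp hM))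
  rwa [det_eq_sign_charpoly_coeff, ← mul_assoc, ← mul_pow, neg_one_mul, neg_neg, one_pow,
    one_mul] at hdet

theorem statement6_general {𝔽 A : Type*} [Field 𝔽] [Fintype 𝔽]
    [CommRing A] [IsDomain A] [Algebra 𝔽 A]
    (halg : ∀ a : A, IsAlgebraic 𝔽 a → a ∈ (algebraMap 𝔽 A).range)
    (n : ℕ) (g : (Matrix (Fin n) (Fin n) A)ˣ) :
    (∀ x : AlgebraicClosure (FractionRing A),
        Polynomial.aeval x (Matrix.charpoly (g : Matrix (Fin n) (Fin n) A)) = 0 →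
        ∃ k : ℕ, 0 < k ∧ x ^ k = 1) ↔
      (∀ i : ℕ, (Matrix.charpoly (g : Matrix (Fin n) (Fin n) A)).coeff i
          ∈ (algebraMap 𝔽 A).range) := by
  set L := AlgebraicClosure (FractionRing A)
  have hinj : Function.Injective (algebraMap A L) := by
    rw [IsScalarTower.algebraMap_eq A (FractionRing A)]
    exact (algebraMap (FractionRing A) L).injective.comp (IsFractionRing.injective A _)
  simp only [← isOfFinOrder_iff_pow_eq_one]
  constructor
  · intro hfin i
    exact halg _ ((Matrix.charpoly_monic _).isIntegral_coeff_of_forall_aeval_eq_zero hinj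
      (fun x hx => (hfin x hx).isIntegral) i).isAlgebraic
  · intro hcoeff x hx
    have hx0 : x ≠ 0 := by
      rintro rfl
      refine ((Matrix.isUnit_charpoly_coeff_zero g.isUnit).map (algebraMap A L)).ne_zero ?_
      rwa [coeff_zero_eq_aeval_zero']
    exact (IsAlgebraic.of_aeval_eq_zero_of_coeff_mem_range (Matrix.charpoly_monic _).ne_zero
      hcoeff hx).isIntegral.isOfFinOrder hx0

/-- Let `A` be a domain of characteristic `p > 0` that is an algebra over a finite field `𝔽`
contained in `A` (with the algebraic closure of `𝔽` in the fraction field `K` of `A`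
intersecting `A` exactly in `𝔽`), and let `K̄` be an algebraic closure of `K`. An element
`g ∈ GL_n(A)` has all eigenvalues (in `K̄`) of finite multiplicative order if and only if its
characteristic polynomial has coefficients in `𝔽`. -/
theorem statement6 {p : ℕ} (hp : p.Prime) {𝔽 A : Type*} [Field 𝔽] [Fintype 𝔽]
    [CommRing A] [IsDomain A] [Algebra 𝔽 A] [CharP A p]
    (halg : ∀ a : A, IsAlgebraic 𝔽 a → a ∈ (algebraMap 𝔽 A).range)
    (n : ℕ) (g : (Matrix (Fin n) (Fin n) A)ˣ) :
    (∀ x : AlgebraicClosure (FractionRing A),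
        Polynomial.aeval x (Matrix.charpoly (g : Matrix (Fin n) (Fin n) A)) = 0 →
        ∃ k : ℕ, 0 < k ∧ x ^ k = 1) ↔
      (∀ i : ℕ, (Matrix.charpoly (g : Matrix (Fin n) (Fin n) A)).coeff i
          ∈ (algebraMap 𝔽 A).range) :=
  statement6_general halg n g
end

section
/- Let A be a complete local Noetherian domain of characteristic p with finite residue field 𝔽 ⊆ A and maximal ideal m, and let Γ ⊆ GL_2(A) be a subgroup such that the reduction map Γ → GL_2(𝔽) has nontrivial kernel and such that the residual representation (the image of Γ in GL_2(𝔽)) acts absolutely irreducibly on 𝔽². Then Γ contains an element whose trace does not lie in 𝔽; in particular Γ contains an element with an eigenvalue of infinite order. -/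
/-!
If all traces of `Γ` lay in `𝔽`, then for `g₁ ≠ 1` in the kernel of reduction and any `g ∈ Γ`,
`tr (g (g₁ - 1)) = tr (g g₁) - tr g` would lie in `𝔽 ∩ 𝔪 = 0`. Absolute irreducibility makes the
reductions of `Γ` span `M₂(𝔽̄)`, since a nonzero matrix orthogonal to them under the trace form
yields a common eigenvector. Lifting four of them that form a basis gives a linear system for the
entries of `g₁ - 1` whose determinant is a unit, so `g₁ = 1`.

In characteristic `p` an element of finite order is periodic under Frobenius, and periodic
elements are closed under sums and differences. So if all eigenvalues of `g` had finite order,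
`tr g - s` would be periodic for the `s ∈ 𝔽` with the same residue. A periodic `u ∈ 𝔪`, say
`u ^ q = u`, satisfies `(1 - u ^ (q - 1)) u = 0` with a unit first factor, so `tr g = s ∈ 𝔽`.
-/

open Matrix Polynomial Function

theorem add_mem_periodicPts {M F : Type*} [Add M] [FunLike F M M] [AddHomClass F M M] {f : F}
    {x y : M} (hx : x ∈ periodicPts f) (hy : y ∈ periodicPts f) : x + y ∈ periodicPts f := by
  obtain ⟨m, hm, hxm⟩ := hx
  obtain ⟨n, hn, hyn⟩ := hy
  refine ⟨m * n, mul_pos hm hn, ?_⟩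
  rw [IsPeriodicPt, IsFixedPt, iterate_map_add, hxm.mul_const n, hyn.const_mul m]

theorem sub_mem_periodicPts {M F : Type*} [AddGroup M] [FunLike F M M] [AddMonoidHomClass F M M]
    {f : F} {x y : M} (hx : x ∈ periodicPts f) (hy : y ∈ periodicPts f) :
    x - y ∈ periodicPts f := by
  obtain ⟨m, hm, hxm⟩ := hx
  obtain ⟨n, hn, hyn⟩ := hy
  refine ⟨m * n, mul_pos hm hn, ?_⟩
  rw [IsPeriodicPt, IsFixedPt, iterate_map_sub, hxm.mul_const n, hyn.const_mul m]

theorem Function.Semiconj.mem_periodicPts_of_injective {α β : Type*} {fa : α → α} {fb : β → β}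
    {g : α → β} (h : Semiconj g fa fb) (hg : Injective g) {x : α} (hx : g x ∈ periodicPts fb) :
    x ∈ periodicPts fa :=
  let ⟨n, hn, hxn⟩ := hx
  ⟨n, hn, hg ((h.iterate_right n x).trans hxn)⟩

section Frobenius

variable {p : ℕ}

theorem FiniteField.mem_periodicPts_frobenius {F : Type*} [Field F] [Finite F] [ExpChar F p]
    (x : F) : x ∈ periodicPts (frobenius F p) :=
  (frobenius F p).injective.mem_periodicPts x

-- Frobenius permutes the finitely many `k`-th roots of unity.
theorem IsOfFinOrder.mem_periodicPts_frobenius {K : Type*} [Field K] [ExpChar K p] {x : K}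
    (hx : IsOfFinOrder x) : x ∈ periodicPts (frobenius K p) := by
  obtain ⟨k, hk, hxk⟩ := isOfFinOrder_iff_pow_eq_one.1 hx
  have : NeZero k := ⟨hk.ne'⟩
  have hinj : Injective fun ζ : rootsOfUnity k K => ζ ^ p := fun ζ η h => by
    have h' : frobenius K p ((ζ : Kˣ) : K) = frobenius K p ((η : Kˣ) : K) := by
      simpa [frobenius_def] using congrArg (fun θ : rootsOfUnity k K => ((θ : Kˣ) : K)) h
    exact Subtype.ext (Units.ext ((frobenius K p).injective h'))
  have hsemi : Semiconj (fun ζ : rootsOfUnity k K => ((ζ : Kˣ) : K)) (fun ζ => ζ ^ p)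
      (frobenius K p) := fun ζ => by simp [frobenius_def]
  simpa [rootsOfUnity.coe_mkOfPowEq] using
    hsemi.mapsTo_periodicPts (hinj.mem_periodicPts (rootsOfUnity.mkOfPowEq x hxk))

theorem IsLocalRing.eq_zero_of_mem_periodicPts_frobenius {R : Type*} [CommRing R] [IsLocalRing R]
    [Fact p.Prime] [CharP R p] {x : R} (hx : x ∈ periodicPts (frobenius R p))
    (hm : x ∈ IsLocalRing.maximalIdeal R) : x = 0 := by
  obtain ⟨n, hn, hxn⟩ := hx
  rw [IsPeriodicPt, IsFixedPt, iterate_frobenius] at hxn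
  have hq : 1 < p ^ n := Nat.one_lt_pow hn.ne' (Fact.out : p.Prime).one_lt
  have hunit : IsUnit (1 - x ^ (p ^ n - 1)) :=
    IsLocalRing.isUnit_one_sub_self_of_mem_nonunits _ (Ideal.pow_mem_of_mem _ hm _ (by omega))
  have : (1 - x ^ (p ^ n - 1)) * x = 0 := by
    rw [sub_mul, one_mul, ← pow_succ, Nat.sub_add_cancel hq.le, hxn, sub_self]
  exact hunit.mul_right_eq_zero.1 this

theorem Matrix.trace_mem_periodicPts_frobenius {A L n : Type*} [CommRing A] [IsDomain A]
    [ExpChar A p] [Field L] [IsAlgClosed L] [Algebra A L] (hinj : Injective (algebraMap A L))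
    [Fintype n] [DecidableEq n] (M : Matrix n n A)
    (hroots : ∀ x : L, aeval x M.charpoly = 0 → IsOfFinOrder x) :
    M.trace ∈ periodicPts (frobenius A p) := by
  have : ExpChar L p := expChar_of_injective_algebraMap hinj p
  refine Semiconj.mem_periodicPts_of_injective ((algebraMap A L).map_frobenius p) hinj ?_
  rw [AddMonoidHom.map_trace, trace_eq_sum_roots_charpoly, charpoly_map]
  refine Multiset.sum_induction _ _ (fun _ _ => add_mem_periodicPts)
    ⟨1, one_pos, map_zero _⟩ fun x hx => (hroots x ?_).mem_periodicPts_frobenius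
  rw [aeval_def, eval₂_eq_eval_map]
  exact (mem_roots'.1 hx).2

theorem mem_range_algebraMap_of_mem_periodicPts_frobenius {A F : Type*} [CommRing A]
    [IsLocalRing A] [Fact p.Prime] [CharP A p] [Field F] [Finite F] [Algebra F A]
    (hsurj : Surjective ((IsLocalRing.residue A).comp (algebraMap F A))) {t : A}
    (ht : t ∈ periodicPts (frobenius A p)) : t ∈ Set.range (algebraMap F A) := by
  have : CharP F p := (algebraMap F A).charP (algebraMap F A).injective p
  obtain ⟨s, hs⟩ := hsurj (IsLocalRing.residue A t)
  have hperiodic : t - algebraMap F A s ∈ periodicPts (frobenius A p) :=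
    sub_mem_periodicPts ht <|
      Semiconj.mapsTo_periodicPts ((algebraMap F A).map_frobenius p)
        (FiniteField.mem_periodicPts_frobenius s)
  have hm : t - algebraMap F A s ∈ IsLocalRing.maximalIdeal A := by
    rw [← Ideal.Quotient.eq_zero_iff_mem, map_sub]
    exact sub_eq_zero.2 hs.symm
  exact ⟨s, (sub_eq_zero.1 (IsLocalRing.eq_zero_of_mem_periodicPts_frobenius hperiodic hm)).symm⟩

end Frobenius

theorem Matrix.exists_eq_trace_mul {R n : Type*} [CommSemiring R] [Fintype n] [DecidableEq n]
    (f : Matrix n n R →ₗ[R] R) : ∃ M : Matrix n n R, ∀ X, f X = (M * X).trace := by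
  refine ⟨of fun i j => f (single j i 1), fun X => ?_⟩
  conv_lhs => rw [matrix_eq_sum_single X]
  simp only [map_sum, trace, diag, mul_apply, of_apply]
  rw [Finset.sum_comm]
  refine Finset.sum_congr rfl fun j _ => Finset.sum_congr rfl fun i _ => ?_
  have hsingle : single i j (X i j) = X i j • single i j 1 := by
    rw [smul_single, smul_eq_mul, mul_one]
  rw [hsingle, map_smul, smul_eq_mul, mul_comm]

theorem Module.Basis.exists_linearIndependent_of_span_eq_top {ι K V : Type*} [Field K]
    [AddCommGroup V] [Module K V] (b : Basis ι K V) {s : Set V} (hs : Submodule.span K s = ⊤) :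
    ∃ v : ι → V, (∀ i, v i ∈ s) ∧ LinearIndependent K v := by
  let b' := Basis.ofSpan hs.ge
  let e := b'.indexEquiv b
  refine ⟨b' ∘ e.symm, fun i => Basis.ofSpan_subset hs.ge ⟨_, rfl⟩, ?_⟩
  exact b'.linearIndependent.comp _ e.symm.injective

theorem Matrix.eq_zero_of_trace_mul_eq_zero {A K n : Type*} [CommRing A] [Field K] (ρ : A →+* K)
    [IsLocalHom ρ] [Fintype n] [DecidableEq n] (g : n × n → Matrix n n A)
    (hg : LinearIndependent K fun i => (g i).map ρ) {N : Matrix n n A}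
    (hN : ∀ i, (g i * N).trace = 0) : N = 0 := by
  -- the rows of `B` are the matrices `g i` flattened, so that `B *ᵥ vec N` lists the `tr (g i N)`
  let B : Matrix (n × n) (n × n) A := of fun i => (g i)ᵀ.vec
  have hB : IsUnit B := by
    rw [isUnit_iff_isUnit_det]
    refine isUnit_of_map_unit ρ _ ?_
    rw [RingHom.map_det, ← isUnit_iff_isUnit_det, ← linearIndependent_rows_iff_isUnit]
    exact hg.map' (LinearEquiv.curry K K n n).symm.toLinearMap (LinearEquiv.ker _)
  have hBN : B *ᵥ N.vec = 0 := funext fun i => by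
    show (g i)ᵀ.vec ⬝ᵥ N.vec = 0
    rw [vec_dotProduct_vec, transpose_transpose, hN]
  exact vec_eq_zero_iff.1 (mulVec_injective_of_isUnit hB (hBN.trans (mulVec_zero B).symm))

section TwoByTwo

variable {K : Type*} [Field K]

theorem Matrix.mul_mul_eq_trace_mul_smul_sub_det_smul_adjugate {R : Type*} [CommRing R]
    (M X : Matrix (Fin 2) (Fin 2) R) : M * X * M = (M * X).trace • M - M.det • X.adjugate := by
  ext i j
  fin_cases i <;> fin_cases j <;>
    simp [mul_apply, Fin.sum_univ_two, trace_fin_two, det_fin_two, adjugate_fin_two] <;> ring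

theorem exists_common_eigenvector_of_det_eq_zero (G : Submonoid (Matrix (Fin 2) (Fin 2) K))
    {M : Matrix (Fin 2) (Fin 2) K} (hM : M ≠ 0) (hdet : M.det = 0)
    (htr : ∀ X ∈ G, (M * X).trace = 0) :
    ∃ v : Fin 2 → K, v ≠ 0 ∧ ∀ X ∈ G, ∃ c : K, X *ᵥ v = c • v := by
  have hker : ∀ X ∈ G, M * X * M = 0 := fun X hX => by
    rw [mul_mul_eq_trace_mul_smul_sub_det_smul_adjugate, htr X hX, hdet, zero_smul, zero_smul,
      sub_zero]
  obtain ⟨w, hw⟩ : ∃ w, M *ᵥ w ≠ 0 := by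
    by_contra! h
    exact hM (mulVec_injective (funext fun w => (h w).trans (zero_mulVec w).symm))
  have hmem : ∀ X ∈ G, X *ᵥ (M *ᵥ w) ∈ LinearMap.ker (mulVecLin M) := fun X hX => by
    rw [LinearMap.mem_ker, mulVecLin_apply, mulVec_mulVec, mulVec_mulVec, hker X hX, zero_mulVec]
  have hu : (⟨M *ᵥ w, by simpa using hmem 1 G.one_mem⟩ : LinearMap.ker (mulVecLin M)) ≠ 0 :=
    by simpa using hw
  have hrank : Module.finrank K (LinearMap.ker (mulVecLin M)) = 1 := by
    have hsum := LinearMap.finrank_range_add_finrank_ker (mulVecLin M)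
    have hrange : 0 < Module.finrank K (LinearMap.range (mulVecLin M)) :=
      Module.finrank_pos_iff_exists_ne_zero.2 ⟨⟨_, w, rfl⟩, by simpa using hw⟩
    have hkerpos : 0 < Module.finrank K (LinearMap.ker (mulVecLin M)) :=
      Module.finrank_pos_iff_exists_ne_zero.2 ⟨_, hu⟩
    rw [Module.finrank_fin_fun] at hsum
    omega
  refine ⟨M *ᵥ w, hw, fun X hX => ?_⟩
  obtain ⟨c, hc⟩ := (finrank_eq_one_iff_of_nonzero' _ hu).1 hrank ⟨_, hmem X hX⟩
  exact ⟨c, (congrArg Subtype.val hc).symm⟩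

theorem exists_common_eigenvector_of_trace_mul_eq_zero [IsAlgClosed K]
    (G : Submonoid (Matrix (Fin 2) (Fin 2) K)) {M : Matrix (Fin 2) (Fin 2) K} (hM : M ≠ 0)
    (htr : ∀ X ∈ G, (M * X).trace = 0) :
    ∃ v : Fin 2 → K, v ≠ 0 ∧ ∀ X ∈ G, ∃ c : K, X *ᵥ v = c • v := by
  by_cases hdet : M.det = 0
  · exact exists_common_eigenvector_of_det_eq_zero G hM hdet htr
  by_cases hscalar : ∀ X ∈ G, ∃ c : K, X = scalar (Fin 2) c
  · refine ⟨Pi.single 0 1, by simp, fun X hX => ?_⟩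
    obtain ⟨c, rfl⟩ := hscalar X hX
    exact ⟨c, by simp [scalar_apply, funext_iff]⟩
  push Not at hscalar
  obtain ⟨X₀, hX₀, hne⟩ := hscalar
  obtain ⟨μ, hμ⟩ := IsAlgClosed.exists_root X₀.charpoly (by simp [charpoly_degree_eq_dim])
  rw [IsRoot, eval_charpoly] at hμ
  -- replace `M` by `M (μ - X₀)`: still nonzero and orthogonal to the monoid `G`, but singular
  refine exists_common_eigenvector_of_det_eq_zero G (M := M * (scalar (Fin 2) μ - X₀)) ?_ ?_ ?_
  · rw [Ne, ((isUnit_iff_isUnit_det M).2 (isUnit_iff_ne_zero.2 hdet)).mul_right_eq_zero,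
      sub_eq_zero]
    exact (hne μ).symm
  · rw [det_mul, hμ, mul_zero]
  · intro X hX
    rw [Matrix.mul_sub, Matrix.sub_mul, trace_sub, Matrix.mul_assoc M X₀,
      htr _ (G.mul_mem hX₀ hX), scalar_apply, ← smul_one_eq_diagonal, mul_smul_comm, mul_one,
      smul_mul_assoc, trace_smul, htr X hX, smul_zero, sub_zero]

theorem Submonoid.span_eq_top_of_not_exists_common_eigenvector [IsAlgClosed K]
    (G : Submonoid (Matrix (Fin 2) (Fin 2) K))
    (h : ¬ ∃ v : Fin 2 → K, v ≠ 0 ∧ ∀ X ∈ G, ∃ c : K, X *ᵥ v = c • v) :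
    Submodule.span K (G : Set (Matrix (Fin 2) (Fin 2) K)) = ⊤ := by
  by_contra hne
  obtain ⟨f, hf, hle⟩ := Submodule.exists_le_ker_of_lt_top _ (lt_top_iff_ne_top.2 hne)
  obtain ⟨M, hM⟩ := exists_eq_trace_mul f
  refine h (exists_common_eigenvector_of_trace_mul_eq_zero G (M := M) ?_ fun X hX => ?_)
  · rintro rfl
    exact hf (LinearMap.ext fun X => by simp [hM])
  · rw [← hM]
    exact hle (Submodule.subset_span hX)

end TwoByTwo

theorem exists_trace_notMem_range_algebraMap {A F K : Type*} [CommRing A] [IsLocalRing A]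
    [Field F] [Algebra F A] [Field K] [IsAlgClosed K] (ρ : A →+* K) [IsLocalHom ρ]
    (S : Submonoid (Matrix (Fin 2) (Fin 2) A))
    (hker : ∃ g ∈ S, g ≠ 1 ∧ g.map (IsLocalRing.residue A) = 1)
    (hirr : ¬ ∃ v : Fin 2 → K, v ≠ 0 ∧ ∀ g ∈ S, ∃ c : K, g.map ρ *ᵥ v = c • v) :
    ∃ g ∈ S, g.trace ∉ Set.range (algebraMap F A) := by
  by_contra! htr
  obtain ⟨g₁, hg₁, hne, hred⟩ := hker
  have hspan := (S.map ρ.mapMatrix).span_eq_top_of_not_exists_common_eigenvector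
    fun ⟨v, hv, h⟩ => hirr ⟨v, hv, fun g hg => h _ ⟨g, hg, rfl⟩⟩
  obtain ⟨X, hXG, hX⟩ :=
    (stdBasis K (Fin 2) (Fin 2)).exists_linearIndependent_of_span_eq_top hspan
  choose g hgS hgX using hXG
  have hF : ∀ x ∈ Set.range (algebraMap F A), IsLocalRing.residue A x = 0 → x = 0 := by
    rintro _ ⟨f, rfl⟩ hf
    rw [((IsLocalRing.residue A).comp (algebraMap F A)).injective (hf.trans (map_zero _).symm),
      map_zero]
  obtain rfl : X = fun i => (g i).map ρ := (funext hgX).symm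
  refine hne (sub_eq_zero.1 (eq_zero_of_trace_mul_eq_zero ρ g hX fun i => hF _ ?_ ?_))
  · obtain ⟨a, ha⟩ := htr _ (S.mul_mem (hgS i) hg₁)
    obtain ⟨b, hb⟩ := htr _ (hgS i)
    exact ⟨a - b, by rw [map_sub, ha, hb, Matrix.mul_sub, mul_one, trace_sub]⟩
  · rw [AddMonoidHom.map_trace]
    change ((IsLocalRing.residue A).mapMatrix (g i * (g₁ - 1))).trace = 0
    rw [map_mul, map_sub, map_one, show (IsLocalRing.residue A).mapMatrix g₁ = 1 from hred,
      sub_self, mul_zero, trace_zero]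

theorem statement7_general {A : Type*} [CommRing A] [IsDomain A] [IsLocalRing A]
    (p : ℕ) (hp : p.Prime) [CharP A p]
    {𝔽 : Type*} [Field 𝔽] [Fintype 𝔽] [Algebra 𝔽 A]
    -- `𝔽 ⊆ A` maps isomorphically onto the residue field of `A`
    (hres : Function.Bijective ((IsLocalRing.residue A).comp (algebraMap 𝔽 A)))
    (Γ : Subgroup (Matrix (Fin 2) (Fin 2) A)ˣ)
    -- the reduction map `Γ → GL₂(𝔽)` has nontrivial kernel
    (hker : ∃ g ∈ Γ, g ≠ 1 ∧
      ((g : Matrix (Fin 2) (Fin 2) A)).map (IsLocalRing.residue A) = 1)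
    -- the residual representation is absolutely irreducible: no common eigenvector over the
    -- algebraic closure of the residue field
    (hirr : ∀ v : Fin 2 → AlgebraicClosure (IsLocalRing.ResidueField A), v ≠ 0 →
      ¬ ∀ g ∈ Γ, ∃ c : AlgebraicClosure (IsLocalRing.ResidueField A),
        (((g : Matrix (Fin 2) (Fin 2) A)).map fun a =>
            algebraMap (IsLocalRing.ResidueField A)
              (AlgebraicClosure (IsLocalRing.ResidueField A))
              (IsLocalRing.residue A a)).mulVec v = c • v) :
    (∃ g ∈ Γ, ((g : Matrix (Fin 2) (Fin 2) A)).trace ∉ Set.range (algebraMap 𝔽 A)) ∧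
    (∃ g ∈ Γ, ∃ x : AlgebraicClosure (FractionRing A),
      Polynomial.aeval x (Matrix.charpoly (g : Matrix (Fin 2) (Fin 2) A)) = 0 ∧
      ∀ k : ℕ, 0 < k → x ^ k ≠ 1) := by
  have : Fact p.Prime := ⟨hp⟩
  obtain ⟨g, hgΓ, hg⟩ :
      ∃ g ∈ Γ, (g : Matrix (Fin 2) (Fin 2) A).trace ∉ Set.range (algebraMap 𝔽 A) := by
    obtain ⟨_, ⟨g, hgΓ, rfl⟩, hg⟩ := exists_trace_notMem_range_algebraMap (F := 𝔽)
      ((algebraMap _ (AlgebraicClosure (IsLocalRing.ResidueField A))).comp (IsLocalRing.residue A))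
      (Γ.toSubmonoid.map (Units.coeHom _))
      (let ⟨g, hg, hne, hred⟩ := hker; ⟨g, ⟨g, hg, rfl⟩, Units.val_injective.ne hne, hred⟩)
      (fun ⟨v, hv, h⟩ => hirr v hv fun g hg => h g ⟨g, hg, rfl⟩)
    exact ⟨g, hgΓ, hg⟩
  refine ⟨⟨g, hgΓ, hg⟩, g, hgΓ, ?_⟩
  by_contra! hfin
  have hinj : Injective (algebraMap A (AlgebraicClosure (FractionRing A))) := by
    rw [IsScalarTower.algebraMap_eq A (FractionRing A)]
    exact (algebraMap (FractionRing A) _).injective.comp (IsFractionRing.injective A _)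
  exact hg <| mem_range_algebraMap_of_mem_periodicPts_frobenius hres.2 <|
    trace_mem_periodicPts_frobenius hinj _ fun x hx => isOfFinOrder_iff_pow_eq_one.2 (hfin x hx)

/-- Let `A` be a complete local Noetherian domain of characteristic `p` with finite residue
field `𝔽 ⊆ A`, and let `Γ ⊆ GL₂(A)` be a subgroup such that the reduction map
`Γ → GL₂(𝔽)` has nontrivial kernel and the residual representation is absolutely irreducible
(no common eigenvector over the algebraic closure of the residue field). Then `Γ` contains an
element whose trace does not lie in `𝔽`; in particular `Γ` contains an element with an
eigenvalue of infinite order. -/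
theorem statement7 {A : Type*} [CommRing A] [IsDomain A] [IsLocalRing A] [IsNoetherianRing A]
    [IsAdicComplete (IsLocalRing.maximalIdeal A) A]
    (p : ℕ) (hp : p.Prime) [CharP A p]
    {𝔽 : Type*} [Field 𝔽] [Fintype 𝔽] [Algebra 𝔽 A]
    -- `𝔽 ⊆ A` maps isomorphically onto the residue field of `A`
    (hres : Function.Bijective ((IsLocalRing.residue A).comp (algebraMap 𝔽 A)))
    (Γ : Subgroup (Matrix (Fin 2) (Fin 2) A)ˣ)
    -- the reduction map `Γ → GL₂(𝔽)` has nontrivial kernel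
    (hker : ∃ g ∈ Γ, g ≠ 1 ∧
      ((g : Matrix (Fin 2) (Fin 2) A)).map (IsLocalRing.residue A) = 1)
    -- the residual representation is absolutely irreducible: no common eigenvector over the
    -- algebraic closure of the residue field
    (hirr : ∀ v : Fin 2 → AlgebraicClosure (IsLocalRing.ResidueField A), v ≠ 0 →
      ¬ ∀ g ∈ Γ, ∃ c : AlgebraicClosure (IsLocalRing.ResidueField A),
        (((g : Matrix (Fin 2) (Fin 2) A)).map fun a =>
            algebraMap (IsLocalRing.ResidueField A)
              (AlgebraicClosure (IsLocalRing.ResidueField A))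
              (IsLocalRing.residue A a)).mulVec v = c • v) :
    (∃ g ∈ Γ, ((g : Matrix (Fin 2) (Fin 2) A)).trace ∉ Set.range (algebraMap 𝔽 A)) ∧
    (∃ g ∈ Γ, ∃ x : AlgebraicClosure (FractionRing A),
      Polynomial.aeval x (Matrix.charpoly (g : Matrix (Fin 2) (Fin 2) A)) = 0 ∧
      ∀ k : ℕ, 0 < k → x ^ k ≠ 1) :=
  statement7_general p hp hres Γ hker hirr
end

section
/- Let A be a complete local characteristic-2 domain with maximal ideal m, fraction field K, and finite residue field 𝔽. Let g ∈ GL_2(A) have distinct eigenvalues α, β ∈ A, and let w = val(α − β) where val is the valuation on K normalized so a uniformizer has valuation 1 (assume A is a DVR). Let Ad = M_2(A) with g acting by conjugation. Suppose z ∈ A is nonzero, Y ∈ ϖ^{val(z)+w+1}·Ad, and m ≥ 0 is such that z·I + Y ∈ (g−1)·Ad + ϖ^m·Ad, where (g−1)X = gXg^{-1} − X. Then m ≤ val(z) + w. -/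
/-!
Multiplying by `g` and taking traces kills the image of `g − 1`, since
`tr ((g X g⁻¹ − X) g) = tr (g X) − tr (X g) = 0`. Applied to `z·I + Y` this gives
`z · tr g ≡ 0 mod ϖ^min(m, vz+w+1)`. In characteristic 2, `tr g = α + β = α − β` has valuation
exactly `w`, so `z · tr g` has valuation exactly `vz + w`, which forces `m ≤ vz + w`.
-/

open Matrix

namespace Matrix

variable {n R : Type*} [Fintype n] [DecidableEq n] [CommRing R]

theorem trace_conj_sub_self_mul_eq_zero {g g' : Matrix n n R} (hg : g' * g = 1)
    (X : Matrix n n R) : trace ((g * X * g' - X) * g) = 0 := by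
  rw [Matrix.sub_mul, mul_assoc _ g', hg, mul_one, trace_sub, trace_mul_comm, sub_self]

theorem dvd_trace_mul_of_eq_conj_sub_self_add_smul {g g' M X Z : Matrix n n R} {c : R}
    (hg : g' * g = 1) (h : M = (g * X * g' - X) + c • Z) : c ∣ trace (M * g) := by
  rw [h, Matrix.add_mul, trace_add, trace_conj_sub_self_mul_eq_zero hg, zero_add, smul_mul_assoc,
    trace_smul, smul_eq_mul]
  exact dvd_mul_right _ _

theorem trace_eq_add_of_charpoly_eq {M : Matrix (Fin 2) (Fin 2) R} {α β : R}
    (h : M.charpoly = (Polynomial.X - Polynomial.C α) * (Polynomial.X - Polynomial.C β)) :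
    trace M = α + β := by
  have hcoeff : ((Polynomial.X - Polynomial.C α) * (Polynomial.X - Polynomial.C β)).coeff 1
      = -(α + β) := by
    simp only [sub_mul, mul_sub, Polynomial.coeff_sub, Polynomial.coeff_X_mul,
      Polynomial.coeff_mul_X, Polynomial.coeff_C_mul, Polynomial.coeff_C_zero,
      Polynomial.coeff_X_zero]
    simp only [Polynomial.coeff_C_succ]
    ring
  rw [trace_eq_neg_charpoly_coeff, h, Fintype.card_fin, hcoeff, neg_neg]

end Matrix

theorem statement9_general {A : Type*} [CommRing A] [IsDomain A] [IsDiscreteValuationRing A]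
    [CharP A 2]
    (ϖ : A) (hϖ : Irreducible ϖ)
    (G : (Matrix (Fin 2) (Fin 2) A)ˣ)
    (α β : A)
    (hchar : Matrix.charpoly (G : Matrix (Fin 2) (Fin 2) A)
        = (Polynomial.X - Polynomial.C α) * (Polynomial.X - Polynomial.C β))
    (w : ℕ) (hw1 : α - β ∈ Ideal.span {ϖ ^ w}) (hw2 : α - β ∉ Ideal.span {ϖ ^ (w + 1)})
    (z : A)
    (vz : ℕ) (hvz1 : z ∈ Ideal.span {ϖ ^ vz}) (hvz2 : z ∉ Ideal.span {ϖ ^ (vz + 1)})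
    (Y : Matrix (Fin 2) (Fin 2) A) (hY : ∃ Y' : Matrix (Fin 2) (Fin 2) A, Y = ϖ ^ (vz + w + 1) • Y')
    (m : ℕ)
    (hmem : ∃ X Z : Matrix (Fin 2) (Fin 2) A,
      z • (1 : Matrix (Fin 2) (Fin 2) A) + Y
        = ((G : Matrix (Fin 2) (Fin 2) A) * X * ((G⁻¹ : (Matrix (Fin 2) (Fin 2) A)ˣ) : Matrix (Fin 2) (Fin 2) A) - X) + ϖ ^ m • Z) :
    m ≤ vz + w := by
  by_contra! hm
  obtain ⟨X, Z, hXZ⟩ := hmem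
  obtain ⟨Y', rfl⟩ := hY
  have htrace : trace ((z • 1 + ϖ ^ (vz + w + 1) • Y') * (G : Matrix (Fin 2) (Fin 2) A))
      = z * (α - β) + ϖ ^ (vz + w + 1) * trace (Y' * (G : Matrix (Fin 2) (Fin 2) A)) := by
    rw [add_mul, smul_mul_assoc, smul_mul_assoc, one_mul, trace_add, trace_smul, trace_smul,
      smul_eq_mul, smul_eq_mul, trace_eq_add_of_charpoly_eq hchar, CharTwo.sub_eq_add]
  have hdvd : ϖ ^ (vz + w + 1) ∣ z * (α - β) := by
    have h := (pow_dvd_pow ϖ hm).trans (dvd_trace_mul_of_eq_conj_sub_self_add_smul G.inv_mul hXZ)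
    rw [htrace] at h
    exact (dvd_add_left (dvd_mul_right _ _)).1 h
  simp only [Ideal.mem_span_singleton] at hw1 hw2 hvz1 hvz2
  exact (succ_dvd_or_succ_dvd_of_succ_sum_dvd_mul hϖ.prime hvz1 hw1 hdvd).elim hvz2 hw2

/-- Let `A` be the ring of integers of a local field of characteristic 2 (a complete DVR with
finite residue field), with uniformizer `ϖ`. Let `g ∈ GL₂(A)` have distinct eigenvalues
`α, β ∈ A`, let `w = val(α − β)`, and let `Ad = M₂(A)` with `g` acting by conjugation.
If `z ∈ A` is nonzero with `val(z) = vz`, `Y ∈ ϖ^(vz+w+1)·Ad`, and `m ≥ 0` is such that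
`z·I + Y ∈ (g−1)·Ad + ϖ^m·Ad` (where `(g−1)X = gXg⁻¹ − X`), then `m ≤ vz + w`. -/
theorem statement9 {A : Type*} [CommRing A] [IsDomain A] [IsDiscreteValuationRing A]
    [CharP A 2] [IsAdicComplete (IsLocalRing.maximalIdeal A) A]
    [Finite (IsLocalRing.ResidueField A)]
    (ϖ : A) (hϖ : Irreducible ϖ)
    (G : (Matrix (Fin 2) (Fin 2) A)ˣ)
    (α β : A) (hαβ : α ≠ β)
    (hchar : Matrix.charpoly (G : Matrix (Fin 2) (Fin 2) A)
        = (Polynomial.X - Polynomial.C α) * (Polynomial.X - Polynomial.C β))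
    (w : ℕ) (hw1 : α - β ∈ Ideal.span {ϖ ^ w}) (hw2 : α - β ∉ Ideal.span {ϖ ^ (w + 1)})
    (z : A) (hz : z ≠ 0)
    (vz : ℕ) (hvz1 : z ∈ Ideal.span {ϖ ^ vz}) (hvz2 : z ∉ Ideal.span {ϖ ^ (vz + 1)})
    (Y : Matrix (Fin 2) (Fin 2) A) (hY : ∃ Y' : Matrix (Fin 2) (Fin 2) A, Y = ϖ ^ (vz + w + 1) • Y')
    (m : ℕ)
    (hmem : ∃ X Z : Matrix (Fin 2) (Fin 2) A,
      z • (1 : Matrix (Fin 2) (Fin 2) A) + Y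
        = ((G : Matrix (Fin 2) (Fin 2) A) * X * ((G⁻¹ : (Matrix (Fin 2) (Fin 2) A)ˣ) : Matrix (Fin 2) (Fin 2) A) - X) + ϖ ^ m • Z) :
    m ≤ vz + w :=
  statement9_general ϖ hϖ G α β hchar w hw1 hw2 z vz hvz1 hvz2 Y hY m hmem
end

section
/- Let A be the ring of integers of a local field K of characteristic 2, with maximal ideal m and valuation val. Let ρ : G → GL_2(A) be a group homomorphism. Suppose σ₀ ∈ G is such that ρ(σ₀) has distinct eigenvalues α₀, β₀ ∈ A and det ρ(σ₀) = 1, and set w = val(tr ρ(σ₀)). If σ ∈ G satisfies det ρ(σ) = 1 and tr ρ(σ) − tr ρ(σ₀) ∈ m^{2w+1}, then ρ(σ) has distinct eigenvalues α, β in A and val(α − β) = val(α₀ − β₀). -/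
/-!
Write `t₀, t` for the traces of `ρ(σ₀), ρ(σ)` and `f = X² - tX + 1` for the characteristic
polynomial of `ρ(σ)`. In characteristic 2 the difference of the roots of `X² - tX + 1` is their
sum `t`, so `val(α₀ - β₀) = val t₀ = w`, and `val t = w` as well since `t ≡ t₀ mod m^(w+1)`.
Moreover `f(α₀) = (t₀ - t) α₀ ∈ m^(2w+1) = t² m = f'(α₀)² m`, so the strong form of Hensel's
lemma gives a root `α` of `f`; the roots `α, t - α` differ by `t ≠ 0`.
-/

open Polynomial IsLocalRing

theorem HenselianRing.exists_sq_add_self_add_eq_zero {R : Type*} [CommRing R] {I : Ideal R}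
    [HenselianRing R I] {c : R} (hc : c ∈ I) : ∃ η : R, η ^ 2 + η + c = 0 := by
  obtain ⟨η, hη, -⟩ := HenselianRing.is_henselian (X ^ 2 + X + C c) (by monicity!) 0
    (by simpa using hc) (by simp)
  exact ⟨η, by simpa using hη⟩

/-- Strong Hensel's lemma for quadratics: `b = a + (2a - t) η` reduces the equation to
`η² + η + c = 0`, which has the simple root `0` modulo `I`. -/
theorem HenselianRing.exists_root_of_eval_eq_sq_mul {R : Type*} [CommRing R] {I : Ideal R}
    [HenselianRing R I] {t d a c : R} (hc : c ∈ I)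
    (ha : a ^ 2 - t * a + d = (2 * a - t) ^ 2 * c) : ∃ b : R, b ^ 2 - t * b + d = 0 := by
  obtain ⟨η, hη⟩ := exists_sq_add_self_add_eq_zero hc
  exact ⟨a + (2 * a - t) * η, by linear_combination ha + (2 * a - t) ^ 2 * hη⟩

theorem X_sq_sub_C_mul_X_add_C_eq_mul_of_root {R : Type*} [CommRing R] {t d b : R}
    (hb : b ^ 2 - t * b + d = 0) :
    (X ^ 2 - C t * X + C d : R[X]) = (X - C b) * (X - C (t - b)) := by
  rw [show d = b * (t - b) by linear_combination hb]
  simp only [map_mul, map_sub]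
  ring

theorem Matrix.trace_eq_add_and_det_eq_mul_of_charpoly_eq {R : Type*} [CommRing R] [Nontrivial R]
    {M : Matrix (Fin 2) (Fin 2) R} {a b : R} (h : M.charpoly = (X - C a) * (X - C b)) :
    M.trace = a + b ∧ M.det = a * b := by
  have hprod : (X - C a) * (X - C b) = X ^ 2 - C (a + b) * X + C (a * b) := by
    simp only [map_add, map_mul]
    ring
  rw [M.charpoly_fin_two, hprod] at h
  have h1 := congrArg (coeff · 1) h
  have h0 := congrArg (coeff · 0) h
  simp [coeff_X, coeff_C] at h1 h0
  exact ⟨by linear_combination -h1, h0⟩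

theorem dvd_pow_of_mem_span_pow_of_notMem {R : Type*} [CommRing R] [IsLocalRing R] {ϖ x : R}
    (hϖ : maximalIdeal R = Ideal.span {ϖ}) {n : ℕ} (h : x ∈ Ideal.span {ϖ ^ n})
    (h' : x ∉ Ideal.span {ϖ ^ (n + 1)}) : x ∣ ϖ ^ n := by
  obtain ⟨s, rfl⟩ := Ideal.mem_span_singleton'.mp h
  have hs : IsUnit s := by
    by_contra hs
    rw [← mem_nonunits_iff, ← mem_maximalIdeal, hϖ, Ideal.mem_span_singleton'] at hs
    obtain ⟨r, rfl⟩ := hs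
    exact h' (Ideal.mem_span_singleton'.mpr ⟨r, by ring⟩)
  exact (associated_unit_mul_left _ _ hs).dvd

theorem mem_span_pow_iff_of_sub_mem {R : Type*} [CommRing R] {ϖ x y : R} {w : ℕ}
    (hx : x ∈ Ideal.span {ϖ ^ w}) (hx' : x ∉ Ideal.span {ϖ ^ (w + 1)})
    (hxy : y - x ∈ Ideal.span {ϖ ^ (w + 1)}) (k : ℕ) :
    y ∈ Ideal.span {ϖ ^ k} ↔ x ∈ Ideal.span {ϖ ^ k} := by
  have hle : ∀ {m n : ℕ}, m ≤ n → Ideal.span {ϖ ^ n} ≤ Ideal.span {ϖ ^ m} := fun h =>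
    Ideal.span_singleton_le_span_singleton.mpr (pow_dvd_pow ϖ h)
  rcases le_or_gt k w with hk | hk
  · refine iff_of_true ?_ (hle hk hx)
    rw [← sub_add_cancel y x]
    exact add_mem (hle (by omega) hxy) (hle hk hx)
  · refine iff_of_false (fun hy => hx' ?_) (fun h => hx' (hle hk h))
    rw [← sub_sub_cancel y x]
    exact sub_mem (hle hk hy) hxy

theorem statement10_general {A : Type*} [CommRing A] [IsDomain A] [IsDiscreteValuationRing A]
    [CharP A 2] [IsAdicComplete (IsLocalRing.maximalIdeal A) A]
    (ϖ : A) (hϖ : Irreducible ϖ)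
    {G : Type*} [Group G] (ρ : G →* (Matrix (Fin 2) (Fin 2) A)ˣ)
    (σ₀ : G) (α₀ β₀ : A)
    (hchar₀ : Matrix.charpoly (ρ σ₀ : Matrix (Fin 2) (Fin 2) A)
        = (Polynomial.X - Polynomial.C α₀) * (Polynomial.X - Polynomial.C β₀))
    (hdet₀ : (ρ σ₀ : Matrix (Fin 2) (Fin 2) A).det = 1)
    (w : ℕ)
    (hw1 : (ρ σ₀ : Matrix (Fin 2) (Fin 2) A).trace ∈ Ideal.span {ϖ ^ w})
    (hw2 : (ρ σ₀ : Matrix (Fin 2) (Fin 2) A).trace ∉ Ideal.span {ϖ ^ (w + 1)})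
    (σ : G) (hdet : (ρ σ : Matrix (Fin 2) (Fin 2) A).det = 1)
    (htr : (ρ σ : Matrix (Fin 2) (Fin 2) A).trace - (ρ σ₀ : Matrix (Fin 2) (Fin 2) A).trace
        ∈ IsLocalRing.maximalIdeal A ^ (2 * w + 1)) :
    ∃ α β : A,
      Matrix.charpoly (ρ σ : Matrix (Fin 2) (Fin 2) A)
          = (Polynomial.X - Polynomial.C α) * (Polynomial.X - Polynomial.C β) ∧
      α ≠ β ∧
      ∀ k : ℕ, α - β ∈ Ideal.span {ϖ ^ k} ↔ α₀ - β₀ ∈ Ideal.span {ϖ ^ k} := by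
  obtain ⟨ht₀, hd₀⟩ := Matrix.trace_eq_add_and_det_eq_mul_of_charpoly_eq hchar₀
  rw [hdet₀] at hd₀
  set t₀ := (ρ σ₀ : Matrix (Fin 2) (Fin 2) A).trace
  set t := (ρ σ : Matrix (Fin 2) (Fin 2) A).trace
  have hm : maximalIdeal A = Ideal.span {ϖ} :=
    (IsDiscreteValuationRing.irreducible_iff_uniformizer ϖ).mp hϖ
  rw [hm, Ideal.span_singleton_pow] at htr
  have hval := mem_span_pow_iff_of_sub_mem hw1 hw2
    (Ideal.span_singleton_le_span_singleton.mpr (pow_dvd_pow ϖ (by omega)) htr)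
  have ht : t ∣ ϖ ^ w :=
    dvd_pow_of_mem_span_pow_of_notMem hm ((hval w).mpr hw1) (mt (hval (w + 1)).mp hw2)
  -- `t² ϖ ∣ ϖ^(2w+1)`, and `t = 2α₀ - t` is the derivative of `X² - tX + 1` at `α₀`
  obtain ⟨c, hc⟩ : t ^ 2 * ϖ ∣ (t₀ - t) * α₀ := by
    refine Dvd.dvd.mul_right ?_ α₀
    rw [← neg_sub, dvd_neg]
    calc t ^ 2 * ϖ ∣ (ϖ ^ w) ^ 2 * ϖ := mul_dvd_mul_right (pow_dvd_pow_of_dvd ht 2) ϖ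
      _ = ϖ ^ (2 * w + 1) := by ring
      _ ∣ t - t₀ := Ideal.mem_span_singleton.mp htr
  obtain ⟨α, hα⟩ := HenselianRing.exists_root_of_eval_eq_sq_mul (I := maximalIdeal A)
    (t := t) (d := 1) (a := α₀) (c := ϖ * c)
    (hm ▸ Ideal.mem_span_singleton.mpr (dvd_mul_right ϖ c))
    (by rw [CharTwo.two_eq_zero (R := A)]; linear_combination hc - α₀ * ht₀ + hd₀)
  have hdiff : α - (t - α) = t := by rw [CharTwo.sub_eq_add]; ring
  refine ⟨α, t - α, ?_, ?_, fun k => ?_⟩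
  · rw [Matrix.charpoly_fin_two, hdet, X_sq_sub_C_mul_X_add_C_eq_mul_of_root hα]
  · rw [Ne, ← sub_eq_zero, hdiff]
    exact fun h => hw2 ((hval (w + 1)).mp (h ▸ zero_mem _))
  · rw [hdiff, CharTwo.sub_eq_add, ← ht₀]
    exact hval k

/-- Let `A` be the ring of integers of a local field of characteristic 2 (a complete DVR with
finite residue field) with uniformizer `ϖ`, and `ρ : G → GL₂(A)`. Suppose `ρ(σ₀)` has distinct
eigenvalues `α₀, β₀ ∈ A` and determinant 1, and `w = val(tr ρ(σ₀))`. If `σ ∈ G` satisfies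
`det ρ(σ) = 1` and `tr ρ(σ) − tr ρ(σ₀) ∈ m^(2w+1)`, then `ρ(σ)` has distinct eigenvalues
`α, β ∈ A` and `val(α − β) = val(α₀ − β₀)`. -/
theorem statement10 {A : Type*} [CommRing A] [IsDomain A] [IsDiscreteValuationRing A]
    [CharP A 2] [IsAdicComplete (IsLocalRing.maximalIdeal A) A]
    [Finite (IsLocalRing.ResidueField A)]
    (ϖ : A) (hϖ : Irreducible ϖ)
    {G : Type*} [Group G] (ρ : G →* (Matrix (Fin 2) (Fin 2) A)ˣ)
    (σ₀ : G) (α₀ β₀ : A) (h₀ : α₀ ≠ β₀)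
    (hchar₀ : Matrix.charpoly (ρ σ₀ : Matrix (Fin 2) (Fin 2) A)
        = (Polynomial.X - Polynomial.C α₀) * (Polynomial.X - Polynomial.C β₀))
    (hdet₀ : (ρ σ₀ : Matrix (Fin 2) (Fin 2) A).det = 1)
    (w : ℕ)
    (hw1 : (ρ σ₀ : Matrix (Fin 2) (Fin 2) A).trace ∈ Ideal.span {ϖ ^ w})
    (hw2 : (ρ σ₀ : Matrix (Fin 2) (Fin 2) A).trace ∉ Ideal.span {ϖ ^ (w + 1)})
    (σ : G) (hdet : (ρ σ : Matrix (Fin 2) (Fin 2) A).det = 1)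
    (htr : (ρ σ : Matrix (Fin 2) (Fin 2) A).trace - (ρ σ₀ : Matrix (Fin 2) (Fin 2) A).trace
        ∈ IsLocalRing.maximalIdeal A ^ (2 * w + 1)) :
    ∃ α β : A,
      Matrix.charpoly (ρ σ : Matrix (Fin 2) (Fin 2) A)
          = (Polynomial.X - Polynomial.C α) * (Polynomial.X - Polynomial.C β) ∧
      α ≠ β ∧
      ∀ k : ℕ, α - β ∈ Ideal.span {ϖ ^ k} ↔ α₀ - β₀ ∈ Ideal.span {ϖ ^ k} :=
  statement10_general ϖ hϖ ρ σ₀ α₀ β₀ hchar₀ hdet₀ w hw1 hw2 σ hdet htr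
end

section
/- Let Γ be a compact subgroup of GL_2(K) for K a local field, acting by conjugation on Ad = M_2(K), and suppose Γ ∩ SL_2(K) is Zariski dense in SL_2 over K. Then the Γ-fixed points of Ad/Z are zero, where Z is the scalar matrices: (Ad/Z)^Γ = 0. -/
/-- A subset `S` of `M₂(K)` (consisting of determinant-1 matrices) is Zariski dense in the
`K`-variety `SL₂`: every polynomial in the matrix entries vanishing on `S` vanishes on all of
`SL₂(K̄)`. -/
def statement14ZariskiDenseInSL2 (K : Type*) [Field K]
    (S : Set (Matrix (Fin 2) (Fin 2) K)) : Prop :=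
  ∀ f : MvPolynomial (Fin 2 × Fin 2) K,
    (∀ g ∈ S, MvPolynomial.eval (fun q => g q.1 q.2) f = 0) →
    ∀ h : Matrix (Fin 2) (Fin 2) (AlgebraicClosure K), h.det = 1 →
      MvPolynomial.aeval (fun q => h q.1 q.2) f = 0

/-!
For `g ∈ Γ` of determinant one, `g X g⁻¹ - X` is scalar, so the off-diagonal entries of
`g X adj(g) - X` vanish. These entries are polynomials in the entries of `g`, so by Zariski density
they vanish at every `h ∈ SL₂(K̄)`. Taking for `h` the unipotent matrices `!![1, t; 0, 1]` and
`!![1, 0; t, 1]` gives polynomial identities in `t` over the infinite field `K̄` whose coefficients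
are the off-diagonal entries of `X` and the difference of its diagonal entries.
-/

open Matrix MvPolynomial

namespace Matrix

variable {n R : Type*} [Fintype n] [DecidableEq n] [CommRing R]

noncomputable def mvPolynomialConjAdjugateSub (X : Matrix n n R) :
    Matrix n n (MvPolynomial (n × n) R) :=
  mvPolynomialX n n R * X.map C * (mvPolynomialX n n R).adjugate - X.map C

theorem mvPolynomialConjAdjugateSub_map_aeval {A : Type*} [CommRing A] [Algebra R A]
    (X : Matrix n n R) (h : Matrix n n A) :
    (mvPolynomialConjAdjugateSub X).map (aeval fun q => h q.1 q.2) =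
      h * X.map (algebraMap R A) * h.adjugate - X.map (algebraMap R A) := by
  change (aeval fun q : n × n => h q.1 q.2).mapMatrix _ = _
  have hC : (aeval fun q : n × n => h q.1 q.2).mapMatrix (X.map C) = X.map (algebraMap R A) := by
    ext; simp
  rw [mvPolynomialConjAdjugateSub, map_sub, map_mul, map_mul, AlgHom.map_adjugate,
    mvPolynomialX_mapMatrix_aeval, hC]

theorem units_inv_eq_adjugate {g : (Matrix n n R)ˣ} (hg : (g : Matrix n n R).det = 1) :
    ((g⁻¹ : (Matrix n n R)ˣ) : Matrix n n R) = (g : Matrix n n R).adjugate := by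
  rw [coe_units_inv, inv_def, hg, Ring.inverse_one, one_smul]

theorem conj_adjugate_sub_apply_eq_zero {g : (Matrix n n R)ˣ} (hg : (g : Matrix n n R).det = 1)
    {X : Matrix n n R} {z : R} (hX : (g : Matrix n n R) * X * (g⁻¹ : (Matrix n n R)ˣ) - X = z • 1)
    {i j : n} (hij : i ≠ j) :
    ((g : Matrix n n R) * X * (g : Matrix n n R).adjugate - X) i j = 0 := by
  rw [← units_inv_eq_adjugate hg, hX, smul_apply, one_apply_ne hij, smul_zero]

end Matrix

theorem eq_zero_of_forall_mul_add_sq_mul_eq_zero {F : Type*} [CommRing F] [IsDomain F] [Infinite F]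
    {a b : F} (h : ∀ t : F, t * a + t ^ 2 * b = 0) : a = 0 ∧ b = 0 := by
  classical
  obtain ⟨τ, hτ⟩ := Infinite.exists_notMem_finset ({0, 1} : Finset F)
  simp only [Finset.mem_insert, Finset.mem_singleton, not_or] at hτ
  have hb : τ * (τ - 1) * b = 0 := by linear_combination h τ - τ * h 1
  have hb : b = 0 := by simpa [hτ.1, sub_eq_zero, hτ.2] using hb
  exact ⟨by simpa [hb] using h 1, hb⟩

theorem Matrix.eq_smul_one_of_forall_conj_adjugate_sub_apply_eq_zero {F : Type*} [CommRing F]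
    [IsDomain F] [Infinite F] {Y : Matrix (Fin 2) (Fin 2) F}
    (hY : ∀ h : Matrix (Fin 2) (Fin 2) F, h.det = 1 → ∀ i j, i ≠ j →
      (h * Y * h.adjugate - Y) i j = 0) :
    Y = Y 0 0 • 1 := by
  have upper (t : F) : t * (Y 1 1 - Y 0 0) + t ^ 2 * -Y 1 0 = 0 := by
    have := hY !![1, t; 0, 1] (by simp [det_fin_two_of]) 0 1 zero_ne_one
    rw [eta_fin_two Y, adjugate_fin_two_of, mul_fin_two, mul_fin_two] at this
    simp only [sub_apply, of_apply, cons_val', cons_val_zero, cons_val_one, cons_val_fin_one] at this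
    linear_combination this
  have lower (t : F) : t * (Y 0 0 - Y 1 1) + t ^ 2 * -Y 0 1 = 0 := by
    have := hY !![1, 0; t, 1] (by simp [det_fin_two_of]) 1 0 one_ne_zero
    rw [eta_fin_two Y, adjugate_fin_two_of, mul_fin_two, mul_fin_two] at this
    simp only [sub_apply, of_apply, cons_val', cons_val_zero, cons_val_one, cons_val_fin_one] at this
    linear_combination this
  obtain ⟨hdiag, h10⟩ := eq_zero_of_forall_mul_add_sq_mul_eq_zero upper
  obtain ⟨-, h01⟩ := eq_zero_of_forall_mul_add_sq_mul_eq_zero lower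
  ext i j
  fin_cases i <;> fin_cases j <;> simp_all [sub_eq_zero, neg_eq_zero]

theorem statement14ZariskiDenseInSL2.conj_adjugate_sub_apply_eq_zero {K : Type*} [Field K]
    {S : Set (Matrix (Fin 2) (Fin 2) K)} (hS : statement14ZariskiDenseInSL2 K S)
    {X : Matrix (Fin 2) (Fin 2) K} {i j : Fin 2}
    (hX : ∀ g ∈ S, (g * X * g.adjugate - X) i j = 0)
    {h : Matrix (Fin 2) (Fin 2) (AlgebraicClosure K)} (hh : h.det = 1) :
    (h * X.map (algebraMap K (AlgebraicClosure K)) * h.adjugate -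
      X.map (algebraMap K (AlgebraicClosure K))) i j = 0 := by
  have hpoly := hS (mvPolynomialConjAdjugateSub X i j) (fun g hg => ?_) h hh
  · rw [← mvPolynomialConjAdjugateSub_map_aeval]
    exact hpoly
  · have := congrFun (congrFun (mvPolynomialConjAdjugateSub_map_aeval (A := K) X g) i) j
    simpa [Algebra.algebraMap_self, coe_aeval_eq_eval, hX g hg] using this

theorem statement14_general {K : Type*} [Field K]
    (Γ : Subgroup (Matrix (Fin 2) (Fin 2) K)ˣ)
    (hdense : statement14ZariskiDenseInSL2 K
      {m : Matrix (Fin 2) (Fin 2) K | ∃ g ∈ Γ, (g : Matrix (Fin 2) (Fin 2) K) = m ∧ m.det = 1})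
    (X : Matrix (Fin 2) (Fin 2) K)
    (hX : ∀ g ∈ Γ, ∃ z : K,
      (g : Matrix (Fin 2) (Fin 2) K) * X * ((g⁻¹ : (Matrix (Fin 2) (Fin 2) K)ˣ) : Matrix (Fin 2) (Fin 2) K) - X
        = z • (1 : Matrix (Fin 2) (Fin 2) K)) :
    ∃ z : K, X = z • (1 : Matrix (Fin 2) (Fin 2) K) := by
  set e := algebraMap K (AlgebraicClosure K)
  have hscalar : X.map e = X.map e 0 0 • 1 :=
    eq_smul_one_of_forall_conj_adjugate_sub_apply_eq_zero fun h hh i j hij =>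
      hdense.conj_adjugate_sub_apply_eq_zero (by
        rintro _ ⟨g, hg, rfl, hdet⟩
        obtain ⟨z, hz⟩ := hX g hg
        exact conj_adjugate_sub_apply_eq_zero hdet hz hij) hh
  refine ⟨X 0 0, map_injective e.injective ?_⟩
  change X.map e = (X 0 0 • 1 : Matrix (Fin 2) (Fin 2) K).map e
  rw [map_smul' _ _ _ (map_mul e), Matrix.map_one _ (map_zero e) (map_one e)]
  exact hscalar

/-- Let `Γ` be a compact subgroup of `GL₂(K)` for `K` a local field (a locally compact
topological field), acting by conjugation on `Ad = M₂(K)`, and suppose `Γ ∩ SL₂(K)` is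
Zariski dense in `SL₂` over `K`. Then `(Ad/Z)^Γ = 0`, where `Z` is the scalar matrices:
any `X` whose image in `Ad/Z` is fixed by `Γ` is itself scalar. -/
theorem statement14 {K : Type*} [Field K] [TopologicalSpace K] [IsTopologicalRing K]
    [LocallyCompactSpace K]
    (Γ : Subgroup (Matrix (Fin 2) (Fin 2) K)ˣ)
    (hcompact : IsCompact (Γ : Set (Matrix (Fin 2) (Fin 2) K)ˣ))
    (hdense : statement14ZariskiDenseInSL2 K
      {m : Matrix (Fin 2) (Fin 2) K | ∃ g ∈ Γ, (g : Matrix (Fin 2) (Fin 2) K) = m ∧ m.det = 1})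
    (X : Matrix (Fin 2) (Fin 2) K)
    (hX : ∀ g ∈ Γ, ∃ z : K,
      (g : Matrix (Fin 2) (Fin 2) K) * X * ((g⁻¹ : (Matrix (Fin 2) (Fin 2) K)ˣ) : Matrix (Fin 2) (Fin 2) K) - X
        = z • (1 : Matrix (Fin 2) (Fin 2) K)) :
    ∃ z : K, X = z • (1 : Matrix (Fin 2) (Fin 2) K) :=
  statement14_general Γ hdense X hX
end

section
/- Let ρ̄ : G → GL_2(𝔽) be an absolutely irreducible representation of a group G over a field 𝔽 of characteristic 2 with dihedral image, and let L correspond to the unique index-2 subgroup H = G_L of G such that ρ̄|_H is abelian. Let A be a complete local domain of characteristic 2 and ρ : G → GL_2(A) a deformation of ρ̄ with finite-order determinant that is non-dihedral (not induced from any index-2 subgroup after extension to the fraction field). Then there exists σ ∈ G \ H such that ρ(σ) has infinite order. -/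
/-!
Suppose every `ρ σ` with `σ ∉ H` has finite order. As `ρ̄` is absolutely irreducible and abelian
on `H`, it is induced from a character of `H`, so its trace vanishes off `H` and `tr ρ σ` lies in
the maximal ideal. In characteristic 2, `tr (M ^ 2 ^ i) = (tr M) ^ 2 ^ i`; for `M` of finite order
two of the powers `M ^ 2 ^ i` coincide, and injectivity of Frobenius gives `t ^ q = t` for
`t = tr M` and some `q ≥ 2`, which forces `t = 0` when `t` is in the maximal ideal.
So `tr ρ σ = 0` for all `σ ∉ H`. For `u = ρ σ₀` with `σ₀ ∉ H` this says `u X u⁻¹ = adj X` for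
every `X` in `ρ(H)`; conjugation is multiplicative while `adj` reverses products, so `ρ(H)` is
commutative and has a common eigenvector over the algebraic closure of `Frac A`, i.e. `ρ` is
dihedral after all.
-/

open Matrix

theorem IsLocalRing.eq_zero_of_pow_eq_self {R : Type*} [CommRing R] [IsLocalRing R] {t : R}
    {q : ℕ} (hq : 1 < q) (ht : t ∈ maximalIdeal R) (h : t ^ q = t) : t = 0 := by
  obtain ⟨n, rfl⟩ : ∃ n, q = n + 2 := ⟨q - 2, by omega⟩
  have hunit : IsUnit (1 - t ^ (n + 1)) :=
    isUnit_one_sub_self_of_mem_nonunits _ (Ideal.pow_mem_of_mem _ ht _ n.succ_pos)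
  refine hunit.mul_left_eq_zero.1 ?_
  rw [mul_sub, mul_one, ← pow_succ', h, sub_self]

namespace Matrix

section CommRing

variable {R : Type*} [CommRing R]

theorem mul_self_eq_trace_smul_sub_det_smul (M : Matrix (Fin 2) (Fin 2) R) :
    M * M = M.trace • M - M.det • 1 := by
  ext i j
  fin_cases i <;> fin_cases j <;>
    simp [mul_apply, Fin.sum_univ_two, trace_fin_two, det_fin_two] <;> ring

theorem mul_eq_adjugate_mul_of_trace_eq_zero {u X : Matrix (Fin 2) (Fin 2) R}
    (hu : u.trace = 0) (huX : (u * X).trace = 0) : u * X = adjugate X * u := by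
  rw [trace_fin_two] at hu
  simp only [trace_fin_two, mul_apply, Fin.sum_univ_two] at huX
  ext i j
  fin_cases i <;> fin_cases j <;>
    simp only [Fin.zero_eta, Fin.mk_one, Fin.isValue, mul_apply, Fin.sum_univ_two,
      adjugate_fin_two, of_apply, cons_val', cons_val_fin_one, cons_val_zero, cons_val_one,
      neg_mul]
  · linear_combination huX - X 1 1 * hu
  · linear_combination X 0 1 * hu
  · linear_combination X 1 0 * hu
  · linear_combination huX - X 0 0 * hu

theorem commute_of_trace_mul_eq_zero {u X Y : Matrix (Fin 2) (Fin 2) R} (hu : IsUnit u)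
    (h : u.trace = 0) (hX : (u * X).trace = 0) (hY : (u * Y).trace = 0)
    (hXY : (u * (X * Y)).trace = 0) : Commute X Y := by
  have hadj : adjugate Y * adjugate X = adjugate X * adjugate Y := by
    apply hu.mul_left_injective
    calc adjugate Y * adjugate X * u = u * (X * Y) := by
          rw [← adjugate_mul_distrib, mul_eq_adjugate_mul_of_trace_eq_zero h hXY]
      _ = adjugate X * u * Y := by rw [← mul_assoc, mul_eq_adjugate_mul_of_trace_eq_zero h hX]
      _ = adjugate X * adjugate Y * u := by
          rw [mul_assoc, mul_eq_adjugate_mul_of_trace_eq_zero h hY, mul_assoc]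
  show X * Y = Y * X
  simpa [adjugate_mul_distrib, adjugate_adjugate'] using congrArg adjugate hadj

theorem trace_sq_of_charTwo [CharP R 2] (M : Matrix (Fin 2) (Fin 2) R) :
    (M ^ 2).trace = M.trace ^ 2 := by
  simp [sq, mul_self_eq_trace_smul_sub_det_smul, CharTwo.two_eq_zero]

theorem trace_pow_two_pow [CharP R 2] (M : Matrix (Fin 2) (Fin 2) R) (i : ℕ) :
    (M ^ 2 ^ i).trace = M.trace ^ 2 ^ i := by
  induction i with
  | zero => simp
  | succ i ih => rw [pow_succ, pow_mul, pow_mul, trace_sq_of_charTwo, ih]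

end CommRing

theorem trace_eq_zero_of_isOfFinOrder {A : Type*} [CommRing A] [IsLocalRing A] [IsReduced A]
    [CharP A 2] {M : Matrix (Fin 2) (Fin 2) A} (hM : IsOfFinOrder M)
    (ht : M.trace ∈ IsLocalRing.maximalIdeal A) : M.trace = 0 := by
  obtain ⟨i, j, hij, hMij⟩ := Set.Finite.exists_lt_map_eq_of_forall_mem
    (f := fun i : ℕ => M ^ 2 ^ i)
    (fun i => (Submonoid.powers M).pow_mem (Submonoid.mem_powers M) _) hM.finite_powers
  have hfrob :
      iterateFrobenius A 2 i M.trace = iterateFrobenius A 2 i (M.trace ^ 2 ^ (j - i)) := by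
    simp only [iterateFrobenius_def, ← pow_mul, ← pow_add, ← trace_pow_two_pow]
    rw [Nat.sub_add_cancel hij.le]
    exact congrArg trace hMij
  exact IsLocalRing.eq_zero_of_pow_eq_self (Nat.one_lt_two_pow (by omega)) ht
    (iterateFrobenius_inj A 2 i hfrob).symm

theorem exists_common_eigenvector {K ι : Type*} [Field K] [IsAlgClosed K]
    (M : ι → Matrix (Fin 2) (Fin 2) K) (hM : ∀ i j, Commute (M i) (M j)) :
    ∃ v ≠ 0, ∀ i, ∃ c : K, M i *ᵥ v = c • v := by
  by_cases hscalar : ∀ i, ∃ c : K, M i = scalar (Fin 2) c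
  · refine ⟨1, one_ne_zero, fun i => ?_⟩
    obtain ⟨c, hc⟩ := hscalar i
    exact ⟨c, by simp [hc]⟩
  push Not at hscalar
  obtain ⟨i₀, hi₀⟩ := hscalar
  obtain ⟨c, hc⟩ := Module.End.exists_eigenvalue (toLin' (M i₀))
  obtain ⟨v, hvE, hv0⟩ := hc.exists_hasEigenvector
  set E := Module.End.eigenspace (toLin' (M i₀)) c
  have hE : E ≠ ⊤ := by
    intro hE
    apply hi₀ c
    apply toLin'.injective
    refine LinearMap.ext fun w => ?_
    have hw : w ∈ E := hE ▸ Submodule.mem_top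
    simpa using Module.End.mem_eigenspace_iff.1 hw
  have hE1 : Module.finrank K E = 1 := by
    have h2 := Submodule.finrank_lt hE
    have h1 := Submodule.one_le_finrank_iff.2 ((Submodule.ne_bot_iff E).2 ⟨v, hvE, hv0⟩)
    rw [Module.finrank_fin_fun] at h2
    omega
  refine ⟨v, hv0, fun i => ?_⟩
  have hMv : M i *ᵥ v ∈ E := by
    rw [Module.End.mem_eigenspace_iff, toLin'_apply] at hvE ⊢
    rw [mulVec_mulVec, (hM i₀ i).eq, ← mulVec_mulVec, hvE, mulVec_smul]
  obtain ⟨d, hd⟩ := (finrank_eq_one_iff_of_nonzero' (⟨v, hvE⟩ : E) (by simpa using hv0)).1 hE1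
    ⟨_, hMv⟩
  exact ⟨d, by simpa using congrArg Subtype.val hd.symm⟩

end Matrix

theorem MonoidHom.trace_apply_eq_zero_of_notMem {G K : Type*} [Group G] [Field K]
    (N : G →* Matrix (Fin 2) (Fin 2) K) {H : Subgroup G} (hH : H.index = 2) {v : Fin 2 → K}
    (hvH : ∀ h ∈ H, ∃ c : K, N h *ᵥ v = c • v) (hvG : ¬ ∀ g, ∃ c : K, N g *ᵥ v = c • v)
    {σ : G} (hσ : σ ∉ H) : (N σ).trace = 0 := by
  by_contra ht
  apply hvG
  obtain ⟨c, hc⟩ := hvH _ (Subgroup.mul_self_mem_of_index_two hH σ)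
  have hσv : N σ *ᵥ v = ((N σ).trace⁻¹ * (c + (N σ).det)) • v := by
    have hch := congrArg (· *ᵥ v) (mul_self_eq_trace_smul_sub_det_smul (N σ))
    simp only [← map_mul, hc, sub_mulVec, smul_mulVec, one_mulVec] at hch
    rw [mul_smul, add_smul, hch, sub_add_cancel, smul_smul, inv_mul_cancel₀ ht, one_smul]
  intro g
  by_cases hg : g ∈ H
  · exact hvH g hg
  obtain ⟨c', hc'⟩ := hvH (σ⁻¹ * g) <| (Subgroup.mul_mem_iff_of_index_two hH).2 <|
    iff_of_false (inv_mem_iff.not.2 hσ) hg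
  refine ⟨c' * ((N σ).trace⁻¹ * (c + (N σ).det)), ?_⟩
  rw [← mul_inv_cancel_left σ g, map_mul, ← mulVec_mulVec, hc', mulVec_smul, hσv, smul_smul]

theorem MonoidHom.trace_apply_eq_zero_of_notMem_of_commute {G 𝔽 : Type*} [Group G] [Field 𝔽]
    (ρbar : G →* (Matrix (Fin 2) (Fin 2) 𝔽)ˣ)
    (hirr : ∀ v : Fin 2 → AlgebraicClosure 𝔽, v ≠ 0 →
      ¬ ∀ g : G, ∃ c : AlgebraicClosure 𝔽,
        (((ρbar g : Matrix (Fin 2) (Fin 2) 𝔽)).map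
            (algebraMap 𝔽 (AlgebraicClosure 𝔽))).mulVec v = c • v)
    {H : Subgroup G} (hH : H.index = 2)
    (hHab : ∀ g₁ ∈ H, ∀ g₂ ∈ H, ρbar g₁ * ρbar g₂ = ρbar g₂ * ρbar g₁)
    {σ : G} (hσ : σ ∉ H) : (ρbar σ : Matrix (Fin 2) (Fin 2) 𝔽).trace = 0 := by
  set ψ := algebraMap 𝔽 (AlgebraicClosure 𝔽)
  let φ := (ψ.mapMatrix (m := Fin 2)).toMonoidHom.comp (Units.coeHom _)
  obtain ⟨v, hv0, hvH⟩ := exists_common_eigenvector (fun h : H => φ (ρbar h)) fun h₁ h₂ =>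
    (show Commute (ρbar h₁) (ρbar h₂) from hHab h₁ h₁.2 h₂ h₂.2).map φ
  have := (φ.comp ρbar).trace_apply_eq_zero_of_notMem hH (fun h hh => hvH ⟨h, hh⟩)
    (hirr v hv0) hσ
  exact (map_eq_zero_iff ψ ψ.injective).1 ((AddMonoidHom.map_trace ψ _).trans this)

theorem statement17_general {G : Type*} [Group G] {𝔽 : Type*} [Field 𝔽]
    (ρbar : G →* (Matrix (Fin 2) (Fin 2) 𝔽)ˣ)
    -- `ρ̄` is absolutely irreducible: no common eigenvector over `𝔽̄`
    (hirr : ∀ v : Fin 2 → AlgebraicClosure 𝔽, v ≠ 0 →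
      ¬ ∀ g : G, ∃ c : AlgebraicClosure 𝔽,
        (((ρbar g : Matrix (Fin 2) (Fin 2) 𝔽)).map
            (algebraMap 𝔽 (AlgebraicClosure 𝔽))).mulVec v = c • v)
    -- `ρ̄` has dihedral image: `H` has index 2 and `ρ̄|_H` is abelian
    (H : Subgroup G) (hHidx : H.index = 2)
    (hHab : ∀ g₁ ∈ H, ∀ g₂ ∈ H, ρbar g₁ * ρbar g₂ = ρbar g₂ * ρbar g₁)
    {A : Type*} [CommRing A] [IsDomain A] [IsLocalRing A]
    [CharP A 2] [Algebra 𝔽 A]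
    (ρ : G →* (Matrix (Fin 2) (Fin 2) A)ˣ)
    -- `ρ` is a deformation of `ρ̄`: the reduction of `ρ` is `ρ̄`
    (hlift : ∀ g : G,
      ((ρ g : Matrix (Fin 2) (Fin 2) A)).map (IsLocalRing.residue A)
        = ((ρbar g : Matrix (Fin 2) (Fin 2) 𝔽)).map fun a =>
            IsLocalRing.residue A (algebraMap 𝔽 A a))
    -- `ρ` is non-dihedral: not induced from (equivalently, not reducible over the algebraic
    -- closure of the fraction field on) any index-2 subgroup
    (hnd : ¬ ∃ N : Subgroup G, N.index = 2 ∧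
      ∃ v : Fin 2 → AlgebraicClosure (FractionRing A), v ≠ 0 ∧
        ∀ g ∈ N, ∃ c : AlgebraicClosure (FractionRing A),
          (((ρ g : Matrix (Fin 2) (Fin 2) A)).map
              (algebraMap A (AlgebraicClosure (FractionRing A)))).mulVec v = c • v) :
    ∃ σ : G, σ ∉ H ∧ ∀ k : ℕ, 0 < k → (ρ σ) ^ k ≠ 1 := by
  by_contra! hfin
  have htr : ∀ σ ∉ H, (ρ σ : Matrix (Fin 2) (Fin 2) A).trace = 0 := by
    intro σ hσ
    obtain ⟨k, hk, hσk⟩ := hfin σ hσ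
    refine trace_eq_zero_of_isOfFinOrder (isOfFinOrder_iff_pow_eq_one.2 ⟨k, hk, ?_⟩) ?_
    · rw [← Units.val_pow_eq_pow_val, hσk, Units.val_one]
    · rw [← IsLocalRing.residue_eq_zero_iff, AddMonoidHom.map_trace, hlift]
      have hbar := ρbar.trace_apply_eq_zero_of_notMem_of_commute hirr hHidx hHab hσ
      exact (AddMonoidHom.map_trace ((IsLocalRing.residue A).comp (algebraMap 𝔽 A)) _).symm.trans
        (by rw [hbar, map_zero])
  obtain ⟨σ₀, hσ₀⟩ : ∃ σ₀, σ₀ ∉ H := by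
    by_contra! h
    simp [(Subgroup.eq_top_iff' H).2 h] at hHidx
  have hoff : ∀ h ∈ H, (ρ σ₀ * ρ h : Matrix (Fin 2) (Fin 2) A).trace = 0 := fun h hh => by
    simpa using htr _ (mt (H.mul_mem_cancel_right hh).1 hσ₀)
  have hcomm : ∀ h₁ h₂ : H, Commute (ρ h₁ : Matrix (Fin 2) (Fin 2) A) (ρ h₂) := fun h₁ h₂ =>
    commute_of_trace_mul_eq_zero (ρ σ₀).isUnit (htr σ₀ hσ₀) (hoff h₁ h₁.2) (hoff h₂ h₂.2)
      (by simpa using hoff _ (H.mul_mem h₁.2 h₂.2))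
  obtain ⟨v, hv0, hv⟩ := exists_common_eigenvector
    (fun h : H => (ρ h : Matrix (Fin 2) (Fin 2) A).map (algebraMap A _)) fun h₁ h₂ =>
      (hcomm h₁ h₂).map (algebraMap A (AlgebraicClosure (FractionRing A))).mapMatrix
  exact hnd ⟨H, hHidx, v, hv0, fun g hg => hv ⟨g, hg⟩⟩

/-- Let `ρ̄ : G → GL₂(𝔽)` be absolutely irreducible over a (finite) field `𝔽` of
characteristic 2 with dihedral image, and let `H = G_L` be the (unique) index-2 subgroup of
`G` such that `ρ̄|_H` is abelian. Let `A` be a complete local domain of characteristic 2 and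
`ρ : G → GL₂(A)` a deformation of `ρ̄` with finite-order determinant that is non-dihedral.
Then there exists `σ ∈ G \ H` such that `ρ(σ)` has infinite order. -/
theorem statement17 {G : Type*} [Group G] {𝔽 : Type*} [Field 𝔽] [Finite 𝔽] [CharP 𝔽 2]
    (ρbar : G →* (Matrix (Fin 2) (Fin 2) 𝔽)ˣ)
    -- `ρ̄` is absolutely irreducible: no common eigenvector over `𝔽̄`
    (hirr : ∀ v : Fin 2 → AlgebraicClosure 𝔽, v ≠ 0 →
      ¬ ∀ g : G, ∃ c : AlgebraicClosure 𝔽,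
        (((ρbar g : Matrix (Fin 2) (Fin 2) 𝔽)).map
            (algebraMap 𝔽 (AlgebraicClosure 𝔽))).mulVec v = c • v)
    -- `ρ̄` has dihedral image: `H` has index 2 and `ρ̄|_H` is abelian
    (H : Subgroup G) (hHidx : H.index = 2)
    (hHab : ∀ g₁ ∈ H, ∀ g₂ ∈ H, ρbar g₁ * ρbar g₂ = ρbar g₂ * ρbar g₁)
    {A : Type*} [CommRing A] [IsDomain A] [IsLocalRing A] [IsNoetherianRing A]
    [IsAdicComplete (IsLocalRing.maximalIdeal A) A] [CharP A 2] [Algebra 𝔽 A]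
    -- `𝔽` is the residue field of `A`
    (hres : Function.Bijective ((IsLocalRing.residue A).comp (algebraMap 𝔽 A)))
    (ρ : G →* (Matrix (Fin 2) (Fin 2) A)ˣ)
    -- `ρ` is a deformation of `ρ̄`: the reduction of `ρ` is `ρ̄`
    (hlift : ∀ g : G,
      ((ρ g : Matrix (Fin 2) (Fin 2) A)).map (IsLocalRing.residue A)
        = ((ρbar g : Matrix (Fin 2) (Fin 2) 𝔽)).map fun a =>
            IsLocalRing.residue A (algebraMap 𝔽 A a))
    -- `det ρ` has finite order
    (hdet : ∃ n : ℕ, 0 < n ∧ ∀ g : G, ((ρ g : Matrix (Fin 2) (Fin 2) A).det) ^ n = 1)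
    -- `ρ` is non-dihedral: not induced from (equivalently, not reducible over the algebraic
    -- closure of the fraction field on) any index-2 subgroup
    (hnd : ¬ ∃ N : Subgroup G, N.index = 2 ∧
      ∃ v : Fin 2 → AlgebraicClosure (FractionRing A), v ≠ 0 ∧
        ∀ g ∈ N, ∃ c : AlgebraicClosure (FractionRing A),
          (((ρ g : Matrix (Fin 2) (Fin 2) A)).map
              (algebraMap A (AlgebraicClosure (FractionRing A)))).mulVec v = c • v) :
    ∃ σ : G, σ ∉ H ∧ ∀ k : ℕ, 0 < k → (ρ σ) ^ k ≠ 1 :=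
  statement17_general ρbar hirr H hHidx hHab ρ hlift hnd
end

section
/- Let L/F be a quadratic extension of fields with Galois group generated by σ, let G_v ⊆ G_F be a subgroup not contained in G_L (i.e. v does not split in L), and set G_w = G_v ∩ G_L, which has index 2 in G_v. Let A be a domain and let ρ : G_F → GL_2(A) be a representation induced from a character χ : G_L → A^×. Suppose there exist characters χ₁, χ₂ : G_v → A^× with tr ρ(g) = χ₁(g) + χ₂(g) for all g ∈ G_v. Then χ₁/χ₂ has order at most 2. -/
/-- Let `L/F` be a quadratic extension (so `G_L` has index 2 in `G = G_F`), let `G_v ⊆ G` be a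
subgroup not contained in `G_L` ("`v` does not split in `L`"), and set `G_w = G_v ∩ G_L`,
which has index 2 in `G_v`. Let `A` be a domain and `ρ : G → GL₀₂(A)` a representation induced
from a character `χ : G_L → A^×`. If there are characters `χ₁, χ₂ : G_v → A^×` with
`tr ρ(g) = χ₁(g) + χ₂(g)` for all `g ∈ G_v`, then `χ₁/χ₂` has order at most 2. -/
theorem statement18 {A : Type*} [CommRing A] [IsDomain A]
    {G : Type*} [Group G] (GL₀ Gv : Subgroup G)
    (hGLidx : GL₀.index = 2) (hGv : ¬ Gv ≤ GL₀)
    (hGw : ((Gv ⊓ GL₀).subgroupOf Gv).index = 2)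
    -- `χ` is a character of `G_L` (extended arbitrarily to `G`)
    (χ : G → Aˣ) (hχ : ∀ h₁ ∈ GL₀, ∀ h₂ ∈ GL₀, χ (h₁ * h₂) = χ h₁ * χ h₂)
    (ρ : G →* (Matrix (Fin 2) (Fin 2) A)ˣ)
    -- `ρ` is induced from `χ`: in a suitable basis, and for `σ₀ ∉ G_L`,
    (σ₀ : G) (hσ₀ : σ₀ ∉ GL₀)
    (hind₁ : ∀ h ∈ GL₀, (ρ h : Matrix (Fin 2) (Fin 2) A)
        = !![(χ h : A), 0; 0, (χ (σ₀⁻¹ * h * σ₀) : A)])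
    (hind₂ : (ρ σ₀ : Matrix (Fin 2) (Fin 2) A) = !![0, (χ (σ₀ * σ₀) : A); 1, 0])
    -- `χ₁, χ₂` are characters of `G_v` (extended arbitrarily to `G`)
    (χ₁ χ₂ : G → Aˣ)
    (hχ₁ : ∀ g₁ ∈ Gv, ∀ g₂ ∈ Gv, χ₁ (g₁ * g₂) = χ₁ g₁ * χ₁ g₂)
    (hχ₂ : ∀ g₁ ∈ Gv, ∀ g₂ ∈ Gv, χ₂ (g₁ * g₂) = χ₂ g₁ * χ₂ g₂)
    -- `tr ρ(g) = χ₁(g) + χ₂(g)` for all `g ∈ G_v`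
    (htr : ∀ g ∈ Gv, (ρ g : Matrix (Fin 2) (Fin 2) A).trace = (χ₁ g : A) + (χ₂ g : A)) :
    -- `χ₁/χ₂` has order at most 2
    ∀ g ∈ Gv, (χ₁ g * (χ₂ g)⁻¹) ^ 2 = 1 := by

  -- trace of ρ(g) is 0 for g ∉ GL₀
  have htr0 : ∀ g : G, g ∉ GL₀ → (ρ g : Matrix (Fin 2) (Fin 2) A).trace = 0 := by
    intro g hg
    have hh : g * σ₀⁻¹ ∈ GL₀ := by
      rw [Subgroup.mul_mem_iff_of_index_two hGLidx]
      simp [hg, hσ₀]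
    have hdecomp : g = (g * σ₀⁻¹) * σ₀ := by group
    have : (ρ g : Matrix (Fin 2) (Fin 2) A)
        = (ρ (g * σ₀⁻¹) : Matrix (Fin 2) (Fin 2) A) * (ρ σ₀ : Matrix (Fin 2) (Fin 2) A) := by
      rw [hdecomp]; push_cast [map_mul]
      simp [Units.val_mul]
    rw [this, hind₁ _ hh, hind₂]
    simp [Matrix.mul_fin_two, Matrix.trace_fin_two_of]
  -- so χ₁ g = - χ₂ g (as units) whenever g ∈ Gv, g ∉ GL₀
  have hneg : ∀ g ∈ Gv, g ∉ GL₀ → χ₁ g = - χ₂ g := by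
    intro g hg hg'
    have h0 := htr g hg
    rw [htr0 g hg'] at h0
    ext
    have : (χ₁ g : A) = -(χ₂ g : A) := eq_neg_of_add_eq_zero_left h0.symm
    simpa using this
  -- pick t ∈ Gv \ GL₀
  obtain ⟨t, ht, ht'⟩ : ∃ t, t ∈ Gv ∧ t ∉ GL₀ := by
    by_contra h
    push_neg at h
    exact hGv fun x hx => h x hx
  intro g hg
  by_cases hgL : g ∈ GL₀
  · -- t * g ∈ Gv \ GL₀
    have htg : t * g ∈ Gv := mul_mem ht hg
    have htg' : t * g ∉ GL₀ := fun h => ht' (by simpa using mul_mem h (inv_mem hgL))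
    have h1 := hneg _ htg htg'
    rw [hχ₁ t ht g hg, hχ₂ t ht g hg, hneg t ht ht'] at h1
    have h2 : χ₁ g = χ₂ g := by
      have h1' : -(χ₂ t * χ₁ g) = -(χ₂ t * χ₂ g) := by rw [← neg_mul, h1]
      exact mul_left_cancel (neg_injective h1')
    rw [h2]
    simp
  · rw [hneg g hg hgL]
    have : -χ₂ g * (χ₂ g)⁻¹ = -1 := by
      rw [neg_mul, mul_inv_cancel]
    rw [this]; exact neg_one_sq
end
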